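/- arXiv:2511.14463 — 6 statements merged into one kernel-verified Lean document; each statement's English description precedes it below -/
import Mathlib

section
/- Let N ≥ 8 be an integer and let a = (a₁,…,a_m), m = ⌊N/2⌋, be a dominant so(N)-weight. Then C_N(a) < 3(N−3) if and only if a is one of the following tuples: the zero tuple; ε₁; ε₁+ε₂; 2ε₁ provided N ≥ 10; s⁺ = (1/2,…,1/2) provided N ≤ 21; s⁻ = (1/2,…,1/2,−1/2) provided N is even and N ≤ 20. (Here 3(N−3) = C_N(ε₁+ε₂+ε₃), so this characterizes the dominant weights whose Casimir eigenvalue is strictly below that of the irreducible representation with highest weight ε₁+ε₂+ε₃.) -/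
open Finset

/-- The Casimir number `C_N(a) = Σ_{i=1}^{m} aᵢ(aᵢ + N − 2i)` for a tuple
`a = (a₁,…,a_m)` of rationals (indexed by `Fin m`, so `a i` is `a_{i+1}`). -/
def casimirSO (N : ℕ) {m : ℕ} (a : Fin m → ℚ) : ℚ :=
  ∑ i : Fin m, a i * (a i + (N : ℚ) - 2 * ((i.1 : ℚ) + 1))

/-- A dominant `so(N)`-weight: all entries integers or all in `ℤ + 1/2`,
non-increasing, last entry `≥ 0` when `N` is odd, and `a_{m−1} ≥ |a_m|`
when `N` is even. -/
def IsDominantSO (N m : ℕ) (a : Fin m → ℚ) : Prop :=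
  ((∀ i, ∃ z : ℤ, a i = (z : ℚ)) ∨ (∀ i, ∃ z : ℤ, a i = (z : ℚ) + 1/2)) ∧
  (∀ i j : Fin m, i ≤ j → a j ≤ a i) ∧
  (Odd N → ∀ hm : 0 < m, 0 ≤ a ⟨m - 1, by omega⟩) ∧
  (Even N → ∀ hm : 2 ≤ m, |a ⟨m - 1, by omega⟩| ≤ a ⟨m - 2, by omega⟩)

/-- The tuple `ε₁ + ⋯ + ε_k`. -/
def epsSum (m k : ℕ) : Fin m → ℚ := fun j => if (j.1 : ℕ) < k then 1 else 0

/-- The tuple `2ε₁`. -/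
def twoEps1 (m : ℕ) : Fin m → ℚ := fun j => if j.1 = 0 then 2 else 0

/-- The half-spin tuple `s⁺ = (1/2,…,1/2)`. -/
def spinPlus (m : ℕ) : Fin m → ℚ := fun _ => 1/2

/-- The half-spin tuple `s⁻ = (1/2,…,1/2,−1/2)`. -/
def spinMinus (m : ℕ) : Fin m → ℚ :=
  fun j => if j.1 = m - 1 then -(1/2) else 1/2

lemma sum_ite_val {m k : ℕ} (hk : k < m) (c : ℚ) :
    ∑ i : Fin m, (if i.1 = k then c else 0) = c := by
  rw [show (fun i : Fin m => if i.1 = k then c else 0)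
      = (fun i : Fin m => if i = ⟨k, hk⟩ then c else 0) by
    funext i; simp [Fin.ext_iff]]
  simp

lemma sum_ite3 {m : ℕ} (hm : 3 ≤ m) (x y z : ℚ) :
    ∑ i : Fin m, (if i.1 = 0 then x else if i.1 = 1 then y else if i.1 = 2 then z else 0)
      = x + y + z := by
  have h : ∀ i : Fin m, (if i.1 = 0 then x else if i.1 = 1 then y else if i.1 = 2 then z else 0)
      = (if i.1 = 0 then x else 0) + (if i.1 = 1 then y else 0) + (if i.1 = 2 then z else 0) := by
    intro i; split_ifs <;> first | omega | ring
  rw [Finset.sum_congr rfl (fun i _ => h i), Finset.sum_add_distrib, Finset.sum_add_distrib,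
    sum_ite_val (by omega) x, sum_ite_val (by omega) y, sum_ite_val (by omega) z]

lemma sum_fin_cast (m : ℕ) : ∑ i : Fin m, ((i.1 : ℚ)) = (m : ℚ) * ((m : ℚ) - 1) / 2 := by
  induction m with
  | zero => simp
  | succ n ih =>
    rw [Fin.sum_univ_castSucc]
    simp only [Fin.coe_castSucc, Fin.val_last, ih]
    push_cast; ring

lemma casimir_zero (N m : ℕ) : casimirSO N (0 : Fin m → ℚ) = 0 := by
  simp [casimirSO]

lemma casimir_eps1 {N m : ℕ} (hm : 3 ≤ m) :
    casimirSO N (epsSum m 1) = (N : ℚ) - 1 := by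
  unfold casimirSO
  rw [Finset.sum_congr rfl (fun i _ => show epsSum m 1 i * (epsSum m 1 i + (N:ℚ) - 2*((i.1:ℚ)+1))
      = (if i.1 = 0 then (N:ℚ) - 1 else if i.1 = 1 then 0 else if i.1 = 2 then 0 else 0) by
    by_cases h : i.1 = 0
    · have : (i.1 : ℚ) = 0 := by rw [h]; norm_num
      simp [epsSum, h, this]; ring
    · simp [epsSum, Nat.lt_one_iff, h]), sum_ite3 hm]
  ring

lemma casimir_eps2 {N m : ℕ} (hm : 3 ≤ m) :
    casimirSO N (epsSum m 2) = 2 * (N : ℚ) - 4 := by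
  unfold casimirSO
  rw [Finset.sum_congr rfl (fun i _ => show epsSum m 2 i * (epsSum m 2 i + (N:ℚ) - 2*((i.1:ℚ)+1))
      = (if i.1 = 0 then (N:ℚ) - 1 else if i.1 = 1 then (N:ℚ) - 3 else if i.1 = 2 then 0 else 0) by
    by_cases h0 : i.1 = 0
    · have : (i.1 : ℚ) = 0 := by rw [h0]; norm_num
      simp [epsSum, h0, this]; ring
    · by_cases h1 : i.1 = 1
      · have : (i.1 : ℚ) = 1 := by rw [h1]; norm_num
        simp [epsSum, h1, h0, this]; ring
      · have : ¬ (i.1 < 2) := by omega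
        simp [epsSum, this, h0, h1]), sum_ite3 hm]
  ring

lemma casimir_two {N m : ℕ} (hm : 3 ≤ m) :
    casimirSO N (twoEps1 m) = 2 * (N : ℚ) := by
  unfold casimirSO
  rw [Finset.sum_congr rfl (fun i _ => show twoEps1 m i * (twoEps1 m i + (N:ℚ) - 2*((i.1:ℚ)+1))
      = (if i.1 = 0 then 2*(N:ℚ) else if i.1 = 1 then 0 else if i.1 = 2 then 0 else 0) by
    by_cases h : i.1 = 0
    · have : (i.1 : ℚ) = 0 := by rw [h]; norm_num
      simp [twoEps1, h, this]
    · simp [twoEps1, h]), sum_ite3 hm]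
  ring

lemma casimir_spinPlus {N m : ℕ} (hNm : N = 2*m ∨ N = 2*m + 1) :
    casimirSO N (spinPlus m) = (N : ℚ) * ((N : ℚ) - 1) / 8 := by
  unfold casimirSO
  rw [Finset.sum_congr rfl (fun i _ => show spinPlus m i * (spinPlus m i + (N:ℚ) - 2*((i.1:ℚ)+1))
      = ((N:ℚ)/2 - 3/4) - (i.1:ℚ) by simp [spinPlus]; ring), Finset.sum_sub_distrib,
    Finset.sum_const, sum_fin_cast]
  simp only [card_univ, Fintype.card_fin, nsmul_eq_mul]
  rcases hNm with h | h
  · have hN : (N : ℚ) = 2*(m:ℚ) := by rw [h]; push_cast; ring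
    rw [hN]; ring
  · have hN : (N : ℚ) = 2*(m:ℚ) + 1 := by rw [h]; push_cast; ring
    rw [hN]; ring

lemma casimir_spinMinus {N m : ℕ} (hm : 1 ≤ m) (hN : N = 2*m) :
    casimirSO N (spinMinus m) = casimirSO N (spinPlus m) := by
  unfold casimirSO
  apply Finset.sum_congr rfl
  intro i _
  by_cases h : i.1 = m - 1
  · have hi : (i.1 : ℚ) = (m : ℚ) - 1 := by
      rw [h, Nat.cast_sub hm]; norm_num
    have hNq : (N : ℚ) = 2 * (m : ℚ) := by rw [hN]; push_cast; ring
    simp only [spinMinus, spinPlus, if_pos h]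
    rw [hi, hNq]; ring
  · simp [spinMinus, spinPlus, h]

set_option maxHeartbeats 1000000 in
/-- for `N ≥ 8`, `m = ⌊N/2⌋` and a dominant `so(N)`-weight `a`,
`C_N(a) < 3(N−3)` iff `a` is `0`, `ε₁`, `ε₁+ε₂`, `2ε₁` (if `N ≥ 10`),
`s⁺` (if `N ≤ 21`) or `s⁻` (if `N` even and `N ≤ 20`). -/
theorem stmt0 (N m : ℕ) (hN : 8 ≤ N) (hm : m = N / 2)
    (a : Fin m → ℚ) (ha : IsDominantSO N m a) :
    casimirSO N a < 3 * ((N : ℚ) - 3) ↔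
      a = 0 ∨ a = epsSum m 1 ∨ a = epsSum m 2 ∨
      (10 ≤ N ∧ a = twoEps1 m) ∨
      (N ≤ 21 ∧ a = spinPlus m) ∨
      (Even N ∧ N ≤ 20 ∧ a = spinMinus m) := by
  obtain ⟨hint, hmono, hodd, heven⟩ := ha
  have hm4 : 4 ≤ m := by omega
  have hNm : N = 2*m ∨ N = 2*m + 1 := by omega
  have hmono' : ∀ i j : Fin m, i.1 ≤ j.1 → a j ≤ a i := fun i j h => hmono i j h
  have hN8 : (8:ℚ) ≤ (N:ℚ) := by exact_mod_cast hN
  have hm2lt : m - 2 < m := by omega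
  have hm1lt : m - 1 < m := by omega
  have h0m : (0:ℕ) < m := by omega
  have h1m : (1:ℕ) < m := by omega
  have h2m : (2:ℕ) < m := by omega
  have hbase : 0 ≤ a ⟨m-2, hm2lt⟩ := by
    rcases Nat.even_or_odd N with he | ho
    · exact le_trans (abs_nonneg _) (heven he (by omega))
    · exact le_trans (hodd ho (by omega)) (hmono' ⟨m-2,hm2lt⟩ ⟨m-1,hm1lt⟩ (show m-2 ≤ m-1 by omega))
  have hpos : ∀ j : Fin m, j.1 ≤ m - 2 → 0 ≤ a j := fun j hj =>
    le_trans hbase (hmono' j ⟨m-2,hm2lt⟩ hj)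
  have tnonneg : ∀ j : Fin m, 0 ≤ a j * (a j + (N:ℚ) - 2*((j.1:ℚ)+1)) := by
    intro j
    by_cases hj : j.1 ≤ m - 2
    · have h1 : 0 ≤ a j := hpos j hj
      have h2 : 2*((j.1:ℚ)+1) ≤ (N:ℚ) := by
        have h3 : 2*(j.1+1) ≤ N := by omega
        exact_mod_cast h3
      exact mul_nonneg h1 (by linarith)
    · have hj1 : j.1 = m - 1 := by omega
      rcases hNm with hNe | hNo
      · have hco : (N:ℚ) - 2*((j.1:ℚ)+1) = 0 := by
          have h3 : (N:ℚ) = 2*((j.1:ℚ)+1) := by exact_mod_cast (show N = 2*(j.1+1) by omega)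
          linarith
        have key : a j * (a j + (N:ℚ) - 2*((j.1:ℚ)+1)) = a j * a j := by
          linear_combination (a j) * hco
        rw [key]; exact mul_self_nonneg _
      · have h0 : 0 ≤ a j := by
          have h := hodd ⟨m, by omega⟩ (by omega)
          have hje : j = ⟨m-1, hm1lt⟩ := Fin.ext hj1
          rw [hje]; exact h
        have h2 : 2*((j.1:ℚ)+1) ≤ (N:ℚ) := by
          exact_mod_cast (show 2*(j.1+1) ≤ N by omega)
        exact mul_nonneg h0 (by linarith)
  have tail0 : ∀ kv, kv ≤ m - 2 → ∀ (hkv : kv < m), a ⟨kv, hkv⟩ ≤ 0 →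
      ∀ j : Fin m, kv ≤ j.1 → a j = 0 := by
    intro kv hkv2 hkv hle j hj
    by_cases hj2 : j.1 ≤ m - 2
    · exact le_antisymm (le_trans (hmono' ⟨kv,hkv⟩ j hj) hle) (hpos j hj2)
    · have hj1 : j.1 = m - 1 := by omega
      have him2 : a ⟨m-2, hm2lt⟩ = 0 :=
        le_antisymm (le_trans (hmono' ⟨kv,hkv⟩ ⟨m-2,hm2lt⟩ hkv2) hle) hbase
      have hje : j = ⟨m-1, hm1lt⟩ := Fin.ext hj1
      rcases Nat.even_or_odd N with he | ho
      · have h' : |a ⟨m-1, hm1lt⟩| ≤ a ⟨m-2, hm2lt⟩ := heven he (by omega)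
        rw [him2] at h'
        rw [hje]; exact abs_nonpos_iff.mp h'
      · have hge : 0 ≤ a ⟨m-1, hm1lt⟩ := hodd ho (by omega)
        have hle' : a ⟨m-1, hm1lt⟩ ≤ a ⟨kv, hkv⟩ := hmono' _ _ (show kv ≤ m-1 by omega)
        rw [hje]; linarith
  constructor
  · -- forward
    intro hC
    rcases hint with hints | hhalf
    · -- integer case
      obtain ⟨z0, hz0⟩ := hints ⟨0, h0m⟩
      have ha0 : 0 ≤ a ⟨0, h0m⟩ := hpos _ (show 0 ≤ m-2 by omega)
      have hz0n : 0 ≤ z0 := by rw [hz0] at ha0; exact_mod_cast ha0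
      rcases (show z0 = 0 ∨ z0 = 1 ∨ z0 = 2 ∨ 3 ≤ z0 by omega) with h|h|h|h
      · -- a = 0
        left
        have hz : a ⟨0, h0m⟩ ≤ 0 := by rw [hz0, h]; norm_num
        funext j
        rw [Pi.zero_apply]
        exact tail0 0 (by omega) h0m hz j (Nat.zero_le _)
      · -- a0 = 1
        have ha0v : a ⟨0, h0m⟩ = 1 := by rw [hz0, h]; norm_num
        obtain ⟨z2, hz2⟩ := hints ⟨2, h2m⟩
        have h2pos : 0 ≤ a ⟨2, h2m⟩ := hpos _ (show 2 ≤ m-2 by omega)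
        have h2le : a ⟨2, h2m⟩ ≤ 1 := by
          have := hmono' ⟨0, h0m⟩ ⟨2, h2m⟩ (show 0 ≤ 2 by omega)
          linarith [ha0v.symm.le]
        have hz2n : z2 = 0 ∨ z2 = 1 := by
          have l1 : (0:ℤ) ≤ z2 := by rw [hz2] at h2pos; exact_mod_cast h2pos
          have l2 : z2 ≤ 1 := by rw [hz2] at h2le; exact_mod_cast h2le
          omega
        rcases hz2n with h2v | h2v
        · -- a2 = 0 : a = eps1 or eps2
          have ha2 : a ⟨2, h2m⟩ ≤ 0 := by rw [hz2, h2v]; norm_num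
          have htail := tail0 2 (by omega) h2m ha2
          obtain ⟨z1, hz1⟩ := hints ⟨1, h1m⟩
          have h1pos : 0 ≤ a ⟨1, h1m⟩ := hpos _ (show 1 ≤ m-2 by omega)
          have h1le : a ⟨1, h1m⟩ ≤ 1 := by
            have := hmono' ⟨0, h0m⟩ ⟨1, h1m⟩ (show 0 ≤ 1 by omega)
            linarith [ha0v.symm.le]
          have hz1n : z1 = 0 ∨ z1 = 1 := by
            have l1 : (0:ℤ) ≤ z1 := by rw [hz1] at h1pos; exact_mod_cast h1pos
            have l2 : z1 ≤ 1 := by rw [hz1] at h1le; exact_mod_cast h1le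
            omega
          rcases hz1n with h1v | h1v
          · -- a = eps1
            right; left
            funext j
            by_cases hj : j.1 = 0
            · have hje : j = ⟨0, h0m⟩ := Fin.ext hj
              rw [hje, ha0v]
              simp [epsSum]
            · have hj1 : 1 ≤ j.1 := by omega
              have ha1 : a ⟨1, h1m⟩ ≤ 0 := by rw [hz1, h1v]; norm_num
              rw [tail0 1 (by omega) h1m ha1 j hj1]
              simp only [epsSum]
              rw [if_neg (show ¬ (j.1 < 1) by omega)]
          · -- a = eps2
            right; right; left
            funext j
            by_cases hj : j.1 < 2
            · have hj01 : j.1 = 0 ∨ j.1 = 1 := by omega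
              rcases hj01 with hj0 | hj0
              · have hje : j = ⟨0, h0m⟩ := Fin.ext hj0
                rw [hje, ha0v]; simp [epsSum]
              · have hje : j = ⟨1, h1m⟩ := Fin.ext hj0
                have ha1v : a ⟨1, h1m⟩ = 1 := by rw [hz1, h1v]; norm_num
                rw [hje, ha1v]; simp [epsSum]
            · rw [htail j (by omega)]
              simp only [epsSum]
              rw [if_neg hj]
        · -- a2 = 1 : excluded
          exfalso
          have ha2v : a ⟨2, h2m⟩ = 1 := by rw [hz2, h2v]; norm_num
          have ha1v : a ⟨1, h1m⟩ = 1 := by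
            have u1 : a ⟨1, h1m⟩ ≤ a ⟨0, h0m⟩ := hmono' _ _ (show 0 ≤ 1 by omega)
            have u2 : a ⟨2, h2m⟩ ≤ a ⟨1, h1m⟩ := hmono' _ _ (show 1 ≤ 2 by omega)
            rw [ha0v] at u1; rw [ha2v] at u2
            linarith
          have hge : 3*((N:ℚ)-3) ≤ casimirSO N a := by
            calc 3*((N:ℚ)-3) = ((N:ℚ)-1) + ((N:ℚ)-3) + ((N:ℚ)-5) := by ring
              _ = ∑ i : Fin m, (if i.1 = 0 then (N:ℚ)-1 else if i.1 = 1 then (N:ℚ)-3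
                    else if i.1 = 2 then (N:ℚ)-5 else 0) := (sum_ite3 (by omega) _ _ _).symm
              _ ≤ casimirSO N a := by
                  show _ ≤ ∑ i : Fin m, a i * (a i + (N:ℚ) - 2*((i.1:ℚ)+1))
                  apply Finset.sum_le_sum
                  intro i _
                  by_cases hi0 : i.1 = 0
                  · have hie : i = ⟨0, h0m⟩ := Fin.ext hi0
                    have hci : (i.1 : ℚ) = 0 := by rw [hi0]; norm_num
                    rw [if_pos hi0, hci, hie, ha0v]
                    linarith
                  · by_cases hi1 : i.1 = 1
                    · have hie : i = ⟨1, h1m⟩ := Fin.ext hi1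
                      have hci : (i.1 : ℚ) = 1 := by rw [hi1]; norm_num
                      rw [if_neg hi0, if_pos hi1, hci, hie, ha1v]
                      linarith
                    · by_cases hi2 : i.1 = 2
                      · have hie : i = ⟨2, h2m⟩ := Fin.ext hi2
                        have hci : (i.1 : ℚ) = 2 := by rw [hi2]; norm_num
                        rw [if_neg hi0, if_neg hi1, if_pos hi2, hci, hie, ha2v]
                        linarith
                      · rw [if_neg hi0, if_neg hi1, if_neg hi2]
                        exact tnonneg i
          linarith
      · -- a0 = 2
        have ha0v : a ⟨0, h0m⟩ = 2 := by rw [hz0, h]; norm_num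
        obtain ⟨z1, hz1⟩ := hints ⟨1, h1m⟩
        have h1pos : 0 ≤ a ⟨1, h1m⟩ := hpos _ (show 1 ≤ m-2 by omega)
        have hz1n : 0 ≤ z1 := by rw [hz1] at h1pos; exact_mod_cast h1pos
        rcases (show z1 = 0 ∨ 1 ≤ z1 by omega) with h1v | h1v
        · -- a = 2eps1
          have ha1 : a ⟨1, h1m⟩ ≤ 0 := by rw [hz1, h1v]; norm_num
          have haeq : a = twoEps1 m := by
            funext j
            by_cases hj : j.1 = 0
            · have hje : j = ⟨0, h0m⟩ := Fin.ext hj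
              rw [hje, ha0v]; simp [twoEps1]
            · rw [tail0 1 (by omega) h1m ha1 j (by omega)]
              simp [twoEps1, hj]
          right; right; right; left
          refine ⟨?_, haeq⟩
          rw [haeq, casimir_two (by omega)] at hC
          have : (9:ℚ) < N := by linarith
          exact_mod_cast this
        · -- a1 ≥ 1 : excluded
          exfalso
          have ha1 : (1:ℚ) ≤ a ⟨1, h1m⟩ := by
            rw [hz1]; exact_mod_cast h1v
          have hge : 3*(N:ℚ) - 3 ≤ casimirSO N a := by
            calc 3*(N:ℚ) - 3 = 2*(N:ℚ) + ((N:ℚ)-3) + 0 := by ring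
              _ = ∑ i : Fin m, (if i.1 = 0 then 2*(N:ℚ) else if i.1 = 1 then (N:ℚ)-3
                    else if i.1 = 2 then 0 else 0) := (sum_ite3 (by omega) _ _ _).symm
              _ ≤ casimirSO N a := by
                  show _ ≤ ∑ i : Fin m, a i * (a i + (N:ℚ) - 2*((i.1:ℚ)+1))
                  apply Finset.sum_le_sum
                  intro i _
                  by_cases hi0 : i.1 = 0
                  · have hie : i = ⟨0, h0m⟩ := Fin.ext hi0
                    have hci : (i.1 : ℚ) = 0 := by rw [hi0]; norm_num
                    rw [if_pos hi0, hci, hie, ha0v]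
                    linarith
                  · by_cases hi1 : i.1 = 1
                    · have hie : i = ⟨1, h1m⟩ := Fin.ext hi1
                      have hci : (i.1 : ℚ) = 1 := by rw [hi1]; norm_num
                      rw [if_neg hi0, if_pos hi1, hci, hie]
                      nlinarith [mul_nonneg (sub_nonneg.mpr ha1)
                        (show (0:ℚ) ≤ a ⟨1, h1m⟩ + (N:ℚ) - 4 by linarith)]
                    · by_cases hi2 : i.1 = 2
                      · rw [if_neg hi0, if_neg hi1, if_pos hi2]
                        exact tnonneg i
                      · rw [if_neg hi0, if_neg hi1, if_neg hi2]
                        exact tnonneg i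
          linarith
      · -- a0 ≥ 3 : excluded
        exfalso
        have h3 : (3:ℚ) ≤ a ⟨0, h0m⟩ := by rw [hz0]; exact_mod_cast h
        have hs := Finset.single_le_sum
          (f := fun i : Fin m => a i * (a i + (N:ℚ) - 2*((i.1:ℚ)+1)))
          (fun i _ => tnonneg i) (mem_univ (⟨0, h0m⟩ : Fin m))
        norm_num at hs
        have hsC : a ⟨0, h0m⟩ * (a ⟨0, h0m⟩ + (N:ℚ) - 2) ≤ casimirSO N a := hs
        nlinarith [mul_nonneg (sub_nonneg.mpr h3)
          (show (0:ℚ) ≤ a ⟨0, h0m⟩ + (N:ℚ) - 2 by linarith)]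
    · -- half-integer case
      obtain ⟨z0, hz0⟩ := hhalf ⟨0, h0m⟩
      have ha0 : 0 ≤ a ⟨0, h0m⟩ := hpos _ (show 0 ≤ m-2 by omega)
      have hz0n : 0 ≤ z0 := by
        by_contra hc
        push_neg at hc
        have h1 : z0 ≤ -1 := by omega
        have h2 : (z0:ℚ) ≤ -1 := by exact_mod_cast h1
        rw [hz0] at ha0; linarith
      rcases (show z0 = 0 ∨ 1 ≤ z0 by omega) with h | h
      · -- a0 = 1/2: spin weights
        have ha0v : a ⟨0, h0m⟩ = 1/2 := by rw [hz0, h]; norm_num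
        have hmid : ∀ j : Fin m, j.1 ≤ m - 2 → a j = 1/2 := by
          intro j hj
          obtain ⟨z, hz⟩ := hhalf j
          have l1 : 0 ≤ a j := hpos j hj
          have l2 : a j ≤ 1/2 := by
            have := hmono' ⟨0, h0m⟩ j (Nat.zero_le _)
            linarith [ha0v.symm.le]
          have hzz : z = 0 := by
            rw [hz] at l1 l2
            have u1 : (-1:ℚ) < z := by linarith
            have u2 : (z:ℚ) ≤ 0 := by linarith
            have v1 : (-1:ℤ) < z := by exact_mod_cast u1
            have v2 : z ≤ 0 := by exact_mod_cast u2
            omega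
          rw [hz, hzz]; norm_num
        obtain ⟨zl, hzl⟩ := hhalf ⟨m-1, hm1lt⟩
        have hCspin : casimirSO N (spinPlus m) = (N:ℚ)*((N:ℚ)-1)/8 := casimir_spinPlus hNm
        rcases Nat.even_or_odd N with hev | hod
        · -- N even
          have hNe : N = 2*m := by
            rcases hNm with h' | h'
            · exact h'
            · exfalso; rw [Nat.even_iff] at hev; omega
          have habs : |a ⟨m-1, hm1lt⟩| ≤ a ⟨m-2, hm2lt⟩ := heven hev (by omega)
          rw [hmid ⟨m-2, hm2lt⟩ (le_refl _)] at habs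
          have hzl01 : zl = 0 ∨ zl = -1 := by
            have h1 := (abs_le.mp habs).1
            have h2 := (abs_le.mp habs).2
            rw [hzl] at h1 h2
            have v1 : (-1:ℤ) ≤ zl := by exact_mod_cast (show (-1:ℚ) ≤ (zl:ℚ) by linarith)
            have v2 : zl ≤ 0 := by exact_mod_cast (show (zl:ℚ) ≤ 0 by linarith)
            omega
          rcases hzl01 with hzv | hzv
          · -- spinPlus
            have haeq : a = spinPlus m := by
              funext j
              by_cases hj : j.1 ≤ m - 2
              · rw [hmid j hj]; rfl
              · have hjlt := j.2
                have hje : j = ⟨m-1, hm1lt⟩ := Fin.ext (show j.1 = m - 1 by omega)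
                rw [hje, hzl, hzv]; norm_num [spinPlus]
            right; right; right; right; left
            refine ⟨?_, haeq⟩
            rw [haeq, hCspin] at hC
            by_contra hgt
            push_neg at hgt
            have h22q : (22:ℚ) ≤ N := by exact_mod_cast (show 22 ≤ N by omega)
            nlinarith [mul_nonneg (show (0:ℚ) ≤ (N:ℚ) - 22 by linarith)
              (show (0:ℚ) ≤ (N:ℚ) - 3 by linarith)]
          · -- spinMinus
            have haeq : a = spinMinus m := by
              funext j
              by_cases hj : j.1 ≤ m - 2
              · rw [hmid j hj]
                have hne : j.1 ≠ m - 1 := by omega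
                simp [spinMinus, hne]
              · have hjlt := j.2
                have hje : j = ⟨m-1, hm1lt⟩ := Fin.ext (show j.1 = m - 1 by omega)
                rw [hje, hzl, hzv]
                norm_num [spinMinus]
            right; right; right; right; right
            refine ⟨⟨m, by omega⟩, ?_, haeq⟩
            rw [haeq, casimir_spinMinus (by omega) hNe, hCspin] at hC
            by_contra hgt
            push_neg at hgt
            have h22 : 22 ≤ N := by rw [Nat.even_iff] at hev; omega
            have h22q : (22:ℚ) ≤ N := by exact_mod_cast h22
            nlinarith [mul_nonneg (show (0:ℚ) ≤ (N:ℚ) - 22 by linarith)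
              (show (0:ℚ) ≤ (N:ℚ) - 3 by linarith)]
        · -- N odd
          have hol : 0 ≤ a ⟨m-1, hm1lt⟩ := hodd hod (by omega)
          have hup : a ⟨m-1, hm1lt⟩ ≤ 1/2 := by
            have := hmono' ⟨0, h0m⟩ ⟨m-1, hm1lt⟩ (Nat.zero_le _)
            linarith [ha0v.symm.le]
          have hlv : a ⟨m-1, hm1lt⟩ = 1/2 := by
            rw [hzl] at hol hup ⊢
            have v1 : (0:ℤ) ≤ zl := by
              by_contra hc; push_neg at hc
              have : (zl:ℚ) ≤ -1 := by exact_mod_cast (show zl ≤ -1 by omega)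
              linarith
            have v2 : zl ≤ 0 := by exact_mod_cast (show (zl:ℚ) ≤ 0 by linarith)
            have hzz : zl = 0 := by omega
            rw [hzz]; norm_num
          have haeq : a = spinPlus m := by
            funext j
            by_cases hj : j.1 ≤ m - 2
            · rw [hmid j hj]; rfl
            · have hjlt := j.2
              have hje : j = ⟨m-1, hm1lt⟩ := Fin.ext (show j.1 = m - 1 by omega)
              rw [hje, hlv]; rfl
          right; right; right; right; left
          refine ⟨?_, haeq⟩
          rw [haeq, hCspin] at hC
          by_contra hgt
          push_neg at hgt
          have h22q : (22:ℚ) ≤ N := by exact_mod_cast (show 22 ≤ N by omega)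
          nlinarith [mul_nonneg (show (0:ℚ) ≤ (N:ℚ) - 22 by linarith)
            (show (0:ℚ) ≤ (N:ℚ) - 3 by linarith)]
      · -- a0 ≥ 3/2 : excluded
        exfalso
        have h32 : (3/2 : ℚ) ≤ a ⟨0, h0m⟩ := by
          rw [hz0]
          have : (1:ℚ) ≤ (z0:ℚ) := by exact_mod_cast h
          linarith
        have hshape : casimirSO N (spinPlus m)
            = ∑ i : Fin m, (1/2) * ((1/2:ℚ) + (N:ℚ) - 2*((i.1:ℚ)+1)) := rfl
        have hbound : casimirSO N (spinPlus m) + (N:ℚ) ≤ casimirSO N a := by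
          have expand : casimirSO N (spinPlus m) + (N:ℚ)
              = ∑ i : Fin m, ((1/2) * ((1/2:ℚ) + (N:ℚ) - 2*((i.1:ℚ)+1))
                  + (if i.1 = 0 then (N:ℚ) else 0)) := by
            rw [Finset.sum_add_distrib, sum_ite_val h0m, hshape]
          rw [expand]
          show _ ≤ ∑ i : Fin m, a i * (a i + (N:ℚ) - 2*((i.1:ℚ)+1))
          apply Finset.sum_le_sum
          intro i _
          by_cases hi0 : i.1 = 0
          · rw [if_pos hi0]
            have hie : i = ⟨0, h0m⟩ := Fin.ext hi0
            have hci : (i.1:ℚ) = 0 := by rw [hi0]; norm_num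
            rw [hci, hie]
            nlinarith [mul_nonneg (sub_nonneg.mpr h32)
              (show (0:ℚ) ≤ a ⟨0, h0m⟩ + (N:ℚ) - 1/2 by linarith)]
          · rw [if_neg hi0]
            by_cases hil : i.1 = m - 1
            · obtain ⟨z, hz⟩ := hhalf i
              rcases hNm with hNe | hNo
              · have hco : (N:ℚ) - 2*((i.1:ℚ)+1) = 0 := by
                  have h3 : (N:ℚ) = 2*((i.1:ℚ)+1) := by
                    exact_mod_cast (show N = 2*(i.1+1) by omega)
                  linarith
                have key : a i * (a i + (N:ℚ) - 2*((i.1:ℚ)+1)) = a i * a i := by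
                  linear_combination (a i) * hco
                have hsq : 1/4 ≤ a i * a i := by
                  rcases (show z ≤ -1 ∨ 0 ≤ z by omega) with hzc | hzc
                  · have : (z:ℚ) ≤ -1 := by exact_mod_cast hzc
                    nlinarith [hz]
                  · have : (0:ℚ) ≤ (z:ℚ) := by exact_mod_cast hzc
                    nlinarith [hz]
                rw [key]
                linarith [hco]
              · have h0i : 0 ≤ a i := by
                  have hh := hodd ⟨m, by omega⟩ (by omega)
                  have hie : i = ⟨m-1, hm1lt⟩ := Fin.ext hil
                  rw [hie]; exact hh
                have hge : 1/2 ≤ a i := by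
                  have v1 : (0:ℤ) ≤ z := by
                    by_contra hc; push_neg at hc
                    have : (z:ℚ) ≤ -1 := by exact_mod_cast (show z ≤ -1 by omega)
                    rw [hz] at h0i; linarith
                  rw [hz]
                  have : (0:ℚ) ≤ (z:ℚ) := by exact_mod_cast v1
                  linarith
                have hco : (N:ℚ) - 2*((i.1:ℚ)+1) = 1 := by
                  have h3 : (N:ℚ) = 2*((i.1:ℚ)+1) + 1 := by
                    exact_mod_cast (show N = 2*(i.1+1) + 1 by omega)
                  linarith
                have key : a i * (a i + (N:ℚ) - 2*((i.1:ℚ)+1)) = a i * (a i + 1) := by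
                  linear_combination (a i) * hco
                have hsq : 3/4 ≤ a i * (a i + 1) := by nlinarith [hge]
                rw [key]
                linarith [hco]
            · have hj2 : i.1 ≤ m - 2 := by have := i.2; omega
              have h1 : 0 ≤ a i := hpos i hj2
              obtain ⟨z, hz⟩ := hhalf i
              have hge : 1/2 ≤ a i := by
                have v1 : (0:ℤ) ≤ z := by
                  by_contra hc; push_neg at hc
                  have : (z:ℚ) ≤ -1 := by exact_mod_cast (show z ≤ -1 by omega)
                  rw [hz] at h1; linarith
                rw [hz]
                have : (0:ℚ) ≤ (z:ℚ) := by exact_mod_cast v1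
                linarith
              have hcge : 2*((i.1:ℚ)+1) ≤ (N:ℚ) := by
                exact_mod_cast (show 2*(i.1+1) ≤ N by omega)
              nlinarith [mul_nonneg (sub_nonneg.mpr hge)
                (show (0:ℚ) ≤ a i + 1/2 + ((N:ℚ) - 2*((i.1:ℚ)+1)) by linarith)]
        have hSv : casimirSO N (spinPlus m) = (N:ℚ)*((N:ℚ)-1)/8 := casimir_spinPlus hNm
        have h89 : (0:ℚ) ≤ ((N:ℚ)-8)*((N:ℚ)-9) := by
          rcases (show N = 8 ∨ 9 ≤ N by omega) with h8 | h9
          · rw [h8]; norm_num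
          · have : (9:ℚ) ≤ (N:ℚ) := by exact_mod_cast h9
            nlinarith
        rw [hSv] at hbound
        nlinarith [hC, hbound, h89]
  · -- reverse
    intro h
    rcases h with h|h|h|⟨h10,h⟩|⟨h21,h⟩|⟨hev,h20,h⟩
    · rw [h, casimir_zero]; linarith
    · rw [h, casimir_eps1 (show 3 ≤ m by omega)]; linarith
    · rw [h, casimir_eps2 (show 3 ≤ m by omega)]; linarith
    · rw [h, casimir_two (show 3 ≤ m by omega)]
      have : (10:ℚ) ≤ N := by exact_mod_cast h10
      linarith
    · rw [h, casimir_spinPlus hNm]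
      have h21q : (N:ℚ) ≤ 21 := by exact_mod_cast h21
      nlinarith [mul_nonneg (sub_nonneg.mpr hN8) (sub_nonneg.mpr h21q)]
    · have hNe : N = 2*m := by
        rcases hNm with h' | h'
        · exact h'
        · exfalso; rw [Nat.even_iff] at hev; omega
      rw [h, casimir_spinMinus (by omega) hNe, casimir_spinPlus hNm]
      have h21q : (N:ℚ) ≤ 21 := by
        have : (N:ℚ) ≤ 20 := by exact_mod_cast h20
        linarith
      nlinarith [mul_nonneg (sub_nonneg.mpr hN8) (sub_nonneg.mpr h21q)]
end

section
/- Let N be an integer with N = 14, N = 20, or N ≥ 26, and let a = (a₁,…,a_m), m = ⌊N/2⌋, be a dominant so(N)-weight. Then C_N(a) < 3(N+1) if and only if: a ∈ {0, ε₁, 2ε₁, ε₁+ε₂, 2ε₁+ε₂, ε₁+ε₂+ε₃}; or N = 14 and a ∈ {ε₁+ε₂+ε₃+ε₄, s⁺, s⁻, ε₁+s⁺, ε₁+s⁻} (the last two being (3/2,1/2,…,1/2) and (3/2,1/2,…,1/2,−1/2)); or N = 20 and a ∈ {s⁺, s⁻}. (Here 3(N+1) = C_N(3ε₁).) -/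
open Finset

/-- The tuple `2ε₁ + ε₂`. -/
def twoEps1Eps2 (m : ℕ) : Fin m → ℚ :=
  fun j => if j.1 = 0 then 2 else if j.1 = 1 then 1 else 0

/-- The tuple `(3/2, 1/2, …, 1/2) = ε₁ + s⁺`. -/
def eps1SpinPlus (m : ℕ) : Fin m → ℚ := fun j => if j.1 = 0 then 3/2 else 1/2

/-- The tuple `(3/2, 1/2, …, 1/2, −1/2) = ε₁ + s⁻`. -/
def eps1SpinMinus (m : ℕ) : Fin m → ℚ :=
  fun j => if j.1 = 0 then 3/2 else if j.1 = m - 1 then -(1/2) else 1/2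

lemma sum_support3 {m : ℕ} (hm : 3 ≤ m) (f : Fin m → ℚ) (hf : ∀ i : Fin m, 3 ≤ i.1 → f i = 0) :
    ∑ i, f i = f ⟨0, by omega⟩ + f ⟨1, by omega⟩ + f ⟨2, by omega⟩ := by
  rw [← Finset.sum_subset (Finset.subset_univ
      ({⟨0, by omega⟩, ⟨1, by omega⟩, ⟨2, by omega⟩} : Finset (Fin m)))
      (fun x _ hx => hf x (by simp [Fin.ext_iff] at hx; omega))]
  rw [Finset.sum_insert (by simp [Fin.ext_iff]), Finset.sum_insert (by simp [Fin.ext_iff]),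
    Finset.sum_singleton]
  ring

lemma sum5_le {m : ℕ} (hm : 5 ≤ m) (t : Fin m → ℚ) (ht : ∀ k, 0 ≤ t k) :
    t ⟨0, by omega⟩ + t ⟨1, by omega⟩ + t ⟨2, by omega⟩ + t ⟨3, by omega⟩ + t ⟨4, by omega⟩
      ≤ ∑ i, t i := by
  have h := Finset.sum_le_sum_of_subset_of_nonneg (Finset.subset_univ
    ({⟨0, by omega⟩, ⟨1, by omega⟩, ⟨2, by omega⟩, ⟨3, by omega⟩, ⟨4, by omega⟩} : Finset (Fin m)))
    (fun k _ _ => ht k)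
  rw [Finset.sum_insert (by simp [Fin.ext_iff]), Finset.sum_insert (by simp [Fin.ext_iff]),
    Finset.sum_insert (by simp [Fin.ext_iff]), Finset.sum_insert (by simp [Fin.ext_iff]),
    Finset.sum_singleton] at h
  linarith

lemma gaussQ (m : ℕ) : (∑ i : Fin m, (i.1 : ℚ)) = m * (m - 1) / 2 := by
  induction m with
  | zero => simp
  | succ n ih =>
    rw [Fin.sum_univ_castSucc]
    simp [ih]
    push_cast
    ring

lemma sum_lower1 {m : ℕ} (t b : Fin m → ℚ) (hb : ∀ i, b i ≤ t i) (i0 : Fin m) :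
    (∑ i, b i) - b i0 + t i0 ≤ ∑ i, t i := by
  classical
  have h1 : ∑ i ∈ univ.erase i0, b i ≤ ∑ i ∈ univ.erase i0, t i :=
    Finset.sum_le_sum (fun i _ => hb i)
  have h2 := Finset.sum_erase_add univ t (mem_univ i0)
  have h3 := Finset.sum_erase_add univ b (mem_univ i0)
  linarith

lemma sum_lower2 {m : ℕ} (t b : Fin m → ℚ) (hb : ∀ i, b i ≤ t i) (i0 i1 : Fin m)
    (h01 : i0 ≠ i1) :
    (∑ i, b i) - b i0 - b i1 + t i0 + t i1 ≤ ∑ i, t i := by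
  classical
  have e : ∀ f : Fin m → ℚ,
      ∑ i ∈ (univ.erase i0).erase i1, f i + f i1 + f i0 = ∑ i, f i := by
    intro f
    rw [Finset.sum_erase_add _ _ (by simp [Ne, h01.symm] : i1 ∈ univ.erase i0),
      Finset.sum_erase_add _ _ (mem_univ i0)]
  have h1 : ∑ i ∈ (univ.erase i0).erase i1, b i ≤ ∑ i ∈ (univ.erase i0).erase i1, t i :=
    Finset.sum_le_sum (fun i _ => hb i)
  have e1 := e t
  have e2 := e b
  linarith

lemma boundSum (N m : ℕ) :
    ∑ i : Fin m, (1/2 : ℚ)*(1/2 + N - 2*((i.1:ℚ)+1)) = m*((N:ℚ)/2 - 3/4) - m*(m-1)/2 := by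
  have e : ∀ i : Fin m, (1/2:ℚ)*(1/2 + N - 2*((i.1:ℚ)+1)) = ((N:ℚ)/2 - 3/4) - (i.1:ℚ) :=
    fun i => by ring
  rw [Finset.sum_congr rfl (fun i _ => e i), Finset.sum_sub_distrib, Finset.sum_const,
    Finset.card_univ, Fintype.card_fin, gaussQ, nsmul_eq_mul]

lemma int_mul_succ_nonneg (z : ℤ) : (0:ℚ) ≤ (z:ℚ)*((z:ℚ)+1) := by
  have h : 0 ≤ z*(z+1) := by
    rcases le_or_gt 0 z with h | h
    · exact mul_nonneg h (by omega)
    · have h1 : z + 1 ≤ 0 := by omega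
      nlinarith
  have h2 : ((z*(z+1) : ℤ) : ℚ) ≥ 0 := by exact_mod_cast h
  push_cast at h2
  linarith

lemma casimir_epsSum1 (N m : ℕ) (hm : 3 ≤ m) : casimirSO N (epsSum m 1) = N - 1 := by
  rw [casimirSO, sum_support3 hm _
    (fun i hi => by rw [epsSum]; simp only [if_neg (by omega : ¬ i.1 < 1)]; ring)]
  norm_num [epsSum]
  try ring

lemma casimir_epsSum2 (N m : ℕ) (hm : 3 ≤ m) : casimirSO N (epsSum m 2) = 2*N - 4 := by
  rw [casimirSO, sum_support3 hm _
    (fun i hi => by rw [epsSum]; simp only [if_neg (by omega : ¬ i.1 < 2)]; ring)]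
  norm_num [epsSum]
  ring

lemma casimir_epsSum3 (N m : ℕ) (hm : 3 ≤ m) : casimirSO N (epsSum m 3) = 3*N - 9 := by
  rw [casimirSO, sum_support3 hm _
    (fun i hi => by rw [epsSum]; simp only [if_neg (by omega : ¬ i.1 < 3)]; ring)]
  norm_num [epsSum]
  ring

lemma casimir_twoEps1 (N m : ℕ) (hm : 3 ≤ m) : casimirSO N (twoEps1 m) = 2*N := by
  rw [casimirSO, sum_support3 hm _
    (fun i hi => by rw [twoEps1]; simp only [if_neg (by omega : ¬ i.1 = 0)]; ring)]
  norm_num [twoEps1]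
  try ring

lemma twoEps1Eps2_zero {m : ℕ} (i : Fin m) (hi : 3 ≤ i.1) :
    ∀ N : ℕ, twoEps1Eps2 m i * (twoEps1Eps2 m i + (N:ℚ) - 2 * ((i.1 : ℚ) + 1)) = 0 := by
  intro N
  rw [twoEps1Eps2]
  simp only [if_neg (by omega : ¬ i.1 = 0), if_neg (by omega : ¬ i.1 = 1)]
  ring

lemma casimir_twoEps1Eps2 (N m : ℕ) (hm : 3 ≤ m) : casimirSO N (twoEps1Eps2 m) = 3*N - 3 := by
  rw [casimirSO, sum_support3 hm _ (fun i hi => twoEps1Eps2_zero i hi N)]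
  norm_num [twoEps1Eps2]
  try ring

set_option maxHeartbeats 4000000 in
/-- for `N = 14`, `N = 20` or `N ≥ 26`, `m = ⌊N/2⌋` and a dominant
`so(N)`-weight `a`, one has `C_N(a) < 3(N+1)` iff
`a ∈ {0, ε₁, 2ε₁, ε₁+ε₂, 2ε₁+ε₂, ε₁+ε₂+ε₃}`, or `N = 14` and
`a ∈ {ε₁+ε₂+ε₃+ε₄, s⁺, s⁻, ε₁+s⁺, ε₁+s⁻}`, or `N = 20` and `a ∈ {s⁺, s⁻}`. -/
theorem stmt2 (N m : ℕ) (hN : N = 14 ∨ N = 20 ∨ 26 ≤ N) (hm : m = N / 2)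
    (a : Fin m → ℚ) (ha : IsDominantSO N m a) :
    casimirSO N a < 3 * ((N : ℚ) + 1) ↔
      (a = 0 ∨ a = epsSum m 1 ∨ a = twoEps1 m ∨ a = epsSum m 2 ∨
        a = twoEps1Eps2 m ∨ a = epsSum m 3) ∨
      (N = 14 ∧ (a = epsSum m 4 ∨ a = spinPlus m ∨ a = spinMinus m ∨
        a = eps1SpinPlus m ∨ a = eps1SpinMinus m)) ∨
      (N = 20 ∧ (a = spinPlus m ∨ a = spinMinus m)) := by
  obtain ⟨hint, hmono, hodd, heven⟩ := ha
  have hm7 : 7 ≤ m := by omega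
  have hNm : N = 2*m ∨ N = 2*m+1 := by omega
  have hN14 : 14 ≤ N := by omega
  have hN14Q : (14:ℚ) ≤ N := by exact_mod_cast hN14
  constructor
  · intro hC
    rw [casimirSO] at hC
    have nonneg : ∀ i : Fin m, i.1 + 2 ≤ m → 0 ≤ a i := by
      intro i hi
      rcases hNm with h | h
      · have h1 := heven ⟨m, by omega⟩ (by omega)
        have h2 : a ⟨m-2, by omega⟩ ≤ a i :=
          hmono i ⟨m-2, by omega⟩ (by simp only [Fin.le_def]; omega)
        have h3 : (0:ℚ) ≤ |a ⟨m-1, by omega⟩| := abs_nonneg _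
        linarith
      · have h1 := hodd ⟨m, by omega⟩ (by omega)
        have h2 : a ⟨m-1, by omega⟩ ≤ a i :=
          hmono i ⟨m-1, by omega⟩ (by simp only [Fin.le_def]; omega)
        linarith
    have tnonneg : ∀ i : Fin m, 0 ≤ a i * (a i + (N:ℚ) - 2*((i.1:ℚ)+1)) := by
      intro i
      by_cases hi : i.1 + 2 ≤ m
      · have h1 := nonneg i hi
        have h2 : 2*((i.1:ℚ)+1) ≤ N := by exact_mod_cast (show 2*(i.1+1) ≤ N by omega)
        nlinarith
      · have hi' : i.1 = m - 1 := by omega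
        rcases hNm with h | h
        · have h2 : (N:ℚ) = 2*((i.1:ℚ)+1) := by exact_mod_cast (show N = 2*(i.1+1) by omega)
          have e : a i * (a i + (N:ℚ) - 2*((i.1:ℚ)+1)) = a i * a i := by rw [h2]; ring
          rw [e]; exact mul_self_nonneg _
        · have h2 : (N:ℚ) = 2*((i.1:ℚ)+1) + 1 := by
            exact_mod_cast (show N = 2*(i.1+1) + 1 by omega)
          have h3 : 0 ≤ a i := by
            have h4 := hodd ⟨m, by omega⟩ (by omega)
            have h5 : i = ⟨m-1, by omega⟩ := Fin.ext hi'
            rw [h5]; exact h4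
          have e : a i * (a i + (N:ℚ) - 2*((i.1:ℚ)+1)) = a i * (a i + 1) := by rw [h2]; ring
          rw [e]; exact mul_nonneg h3 (by linarith)
    have tailzero : ∀ j : Fin m, j.1 + 2 ≤ m → a j = 0 → ∀ i : Fin m, j ≤ i → a i = 0 := by
      intro j hj hz0 i hij
      by_cases hi : i.1 + 2 ≤ m
      · exact le_antisymm (hz0 ▸ hmono j i hij) (nonneg i hi)
      · have hi' : i.1 = m - 1 := by omega
        rcases hNm with h | h
        · have h1 := heven ⟨m, by omega⟩ (by omega)
          have hP : a ⟨m-2, by omega⟩ = 0 := by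
            refine le_antisymm ?_ (nonneg _ (show m-2+2 ≤ m by omega))
            calc a ⟨m-2, by omega⟩ ≤ a j :=
                  hmono j ⟨m-2, by omega⟩ (by simp only [Fin.le_def]; omega)
              _ = 0 := hz0
          have h2 : |a ⟨m-1, by omega⟩| ≤ 0 := hP ▸ h1
          have h3 : a ⟨m-1, by omega⟩ = 0 := abs_eq_zero.mp (le_antisymm h2 (abs_nonneg _))
          have h4 : i = ⟨m-1, by omega⟩ := Fin.ext hi'
          rw [h4]; exact h3
        · have h1 := hodd ⟨m, by omega⟩ (by omega)
          have h2 : a i ≤ 0 := hz0 ▸ hmono j i hij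
          have h4 : i = ⟨m-1, by omega⟩ := Fin.ext hi'
          rw [h4]; rw [h4] at h2; linarith
    have key5 : a ⟨0, by omega⟩ * (a ⟨0, by omega⟩ + (N:ℚ) - 2)
        + a ⟨1, by omega⟩ * (a ⟨1, by omega⟩ + (N:ℚ) - 4)
        + a ⟨2, by omega⟩ * (a ⟨2, by omega⟩ + (N:ℚ) - 6)
        + a ⟨3, by omega⟩ * (a ⟨3, by omega⟩ + (N:ℚ) - 8)
        + a ⟨4, by omega⟩ * (a ⟨4, by omega⟩ + (N:ℚ) - 10)
        ≤ ∑ i : Fin m, a i * (a i + (N:ℚ) - 2*((i.1:ℚ)+1)) := by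
      have h := sum5_le (show 5 ≤ m by omega)
        (fun i => a i * (a i + (N:ℚ) - 2*((i.1:ℚ)+1))) tnonneg
      norm_num at h
      convert h using 2 <;> norm_num <;> ring
    have ha0lt : a ⟨0, by omega⟩ < 3 := by
      by_contra hlt
      push_neg at hlt
      have tn1 := tnonneg ⟨1, by omega⟩
      have tn2 := tnonneg ⟨2, by omega⟩
      have tn3 := tnonneg ⟨3, by omega⟩
      have tn4 := tnonneg ⟨4, by omega⟩
      norm_num at tn1 tn2 tn3 tn4
      nlinarith [key5, hC, mul_nonneg (by linarith : (0:ℚ) ≤ a ⟨0, by omega⟩ - 3)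
        (by linarith : (0:ℚ) ≤ a ⟨0, by omega⟩ + (N:ℚ) + 1)]
    rcases hint with hz | hz
    · -- integer case
      have bin : ∀ i : Fin m, i.1 + 2 ≤ m → a i ≤ 1 → a i = 0 ∨ a i = 1 := by
        intro i hi hle
        obtain ⟨z, hzi⟩ := hz i
        have h1 : (0:ℚ) ≤ (z:ℚ) := hzi ▸ nonneg i hi
        have h2 : (z:ℚ) ≤ 1 := hzi ▸ hle
        have h1' : (0:ℤ) ≤ z := by exact_mod_cast h1
        have h2' : z ≤ 1 := by exact_mod_cast h2
        have h3 : z = 0 ∨ z = 1 := by omega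
        rcases h3 with h | h <;> rw [hzi, h] <;> norm_num
      obtain ⟨z0, hz0⟩ := hz ⟨0, by omega⟩
      have h00 : (0:ℚ) ≤ (z0:ℚ) := hz0 ▸ nonneg ⟨0, by omega⟩ (show 0+2 ≤ m by omega)
      have h01 : (z0:ℚ) < 3 := hz0 ▸ ha0lt
      have h00' : (0:ℤ) ≤ z0 := by exact_mod_cast h00
      have h01' : z0 < 3 := by exact_mod_cast h01
      rcases (show z0 = 0 ∨ z0 = 1 ∨ z0 = 2 by omega) with h0 | h0 | h0
      · -- a = 0
        left; left
        funext i
        have h1 : a ⟨0, by omega⟩ = 0 := by rw [hz0, h0]; norm_num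
        have h2 := tailzero ⟨0, by omega⟩ (show 0+2 ≤ m by omega) h1 i
          (Fin.le_def.mpr (show (0:ℕ) ≤ i.1 by omega))
        simpa using h2
      · -- a0 = 1
        have ha0 : a ⟨0, by omega⟩ = 1 := by rw [hz0, h0]; norm_num
        have one_seg : ∀ k : Fin m, a k = 1 → ∀ i : Fin m, i ≤ k → a i = 1 := by
          intro k hk i hik
          refine le_antisymm ?_ ?_
          · rw [← ha0]
            exact hmono ⟨0, by omega⟩ i (Fin.le_def.mpr (show (0:ℕ) ≤ i.1 by omega))
          · rw [← hk]; exact hmono i k hik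
        rcases bin ⟨4, by omega⟩ (show 4+2 ≤ m by omega)
            (by rw [← ha0]
                exact hmono ⟨0, by omega⟩ ⟨4, by omega⟩ (Fin.mk_le_mk.mpr (by omega)))
            with h4 | h4
        · -- a4 = 0
          have tail4 := tailzero ⟨4, by omega⟩ (show 4+2 ≤ m by omega) h4
          rcases bin ⟨3, by omega⟩ (show 3+2 ≤ m by omega)
              (by rw [← ha0]
                  exact hmono ⟨0, by omega⟩ ⟨3, by omega⟩ (Fin.mk_le_mk.mpr (by omega)))
              with h3 | h3
          · -- a3 = 0
            have tail3 := tailzero ⟨3, by omega⟩ (show 3+2 ≤ m by omega) h3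
            rcases bin ⟨2, by omega⟩ (show 2+2 ≤ m by omega)
                (by rw [← ha0]
                    exact hmono ⟨0, by omega⟩ ⟨2, by omega⟩ (Fin.mk_le_mk.mpr (by omega)))
                with h2 | h2
            · -- a2 = 0
              have tail2 := tailzero ⟨2, by omega⟩ (show 2+2 ≤ m by omega) h2
              rcases bin ⟨1, by omega⟩ (show 1+2 ≤ m by omega)
                  (by rw [← ha0]
                      exact hmono ⟨0, by omega⟩ ⟨1, by omega⟩ (Fin.mk_le_mk.mpr (by omega)))
                  with h1 | h1
              · -- a = epsSum m 1
                left; right; left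
                funext i
                rw [epsSum]
                by_cases hik : i.1 < 1
                · rw [if_pos hik]
                  have he : i = ⟨0, by omega⟩ := Fin.ext (show i.1 = 0 by omega)
                  rw [he]; exact ha0
                · rw [if_neg hik]
                  exact tailzero ⟨1, by omega⟩ (show 1+2 ≤ m by omega) h1 i
                    (Fin.le_def.mpr (show (1:ℕ) ≤ i.1 by omega))
              · -- a = epsSum m 2
                left; right; right; right; left
                funext i
                rw [epsSum]
                by_cases hik : i.1 < 2
                · rw [if_pos hik]
                  exact one_seg ⟨1, by omega⟩ h1 i (Fin.le_def.mpr (show i.1 ≤ 1 by omega))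
                · rw [if_neg hik]
                  exact tail2 i (Fin.le_def.mpr (show (2:ℕ) ≤ i.1 by omega))
            · -- a = epsSum m 3
              left; right; right; right; right; right
              funext i
              rw [epsSum]
              by_cases hik : i.1 < 3
              · rw [if_pos hik]
                exact one_seg ⟨2, by omega⟩ h2 i (Fin.le_def.mpr (show i.1 ≤ 2 by omega))
              · rw [if_neg hik]
                exact tail3 i (Fin.le_def.mpr (show (3:ℕ) ≤ i.1 by omega))
          · -- a3 = 1 : N = 14 and a = epsSum m 4
            have e1 := one_seg ⟨3, by omega⟩ h3 ⟨1, by omega⟩ (Fin.mk_le_mk.mpr (by omega))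
            have e2 := one_seg ⟨3, by omega⟩ h3 ⟨2, by omega⟩ (Fin.mk_le_mk.mpr (by omega))
            have hN' : N = 14 := by
              rw [ha0, e1, e2, h3, h4] at key5
              have hlt : (N:ℚ) < 19 := by nlinarith [key5, hC]
              have hlt' : N < 19 := by exact_mod_cast hlt
              omega
            right; left
            refine ⟨hN', Or.inl ?_⟩
            funext i
            rw [epsSum]
            by_cases hik : i.1 < 4
            · rw [if_pos hik]
              exact one_seg ⟨3, by omega⟩ h3 i (Fin.le_def.mpr (show i.1 ≤ 3 by omega))
            · rw [if_neg hik]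
              exact tail4 i (Fin.le_def.mpr (show (4:ℕ) ≤ i.1 by omega))
        · -- a4 = 1 : contradiction
          exfalso
          have e1 := one_seg ⟨4, by omega⟩ h4 ⟨1, by omega⟩ (Fin.mk_le_mk.mpr (by omega))
          have e2 := one_seg ⟨4, by omega⟩ h4 ⟨2, by omega⟩ (Fin.mk_le_mk.mpr (by omega))
          have e3 := one_seg ⟨4, by omega⟩ h4 ⟨3, by omega⟩ (Fin.mk_le_mk.mpr (by omega))
          rw [ha0, e1, e2, e3, h4] at key5
          nlinarith [key5, hC, hN14Q]
      · -- a0 = 2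
        have ha0 : a ⟨0, by omega⟩ = 2 := by rw [hz0, h0]; norm_num
        obtain ⟨z1, hz1⟩ := hz ⟨1, by omega⟩
        have b1 : (0:ℚ) ≤ (z1:ℚ) := hz1 ▸ nonneg ⟨1, by omega⟩ (show 1+2 ≤ m by omega)
        have b2 : (z1:ℚ) ≤ 2 := by
          have h := hmono ⟨0, by omega⟩ ⟨1, by omega⟩ (Fin.mk_le_mk.mpr (by omega))
          rw [ha0, hz1] at h; exact h
        have b1' : (0:ℤ) ≤ z1 := by exact_mod_cast b1
        have b2' : z1 ≤ 2 := by exact_mod_cast b2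
        rcases (show z1 = 0 ∨ z1 = 1 ∨ z1 = 2 by omega) with h1 | h1 | h1
        · -- a = twoEps1
          have ha1 : a ⟨1, by omega⟩ = 0 := by rw [hz1, h1]; norm_num
          left; right; right; left
          funext i
          rw [twoEps1]
          by_cases hik : i.1 = 0
          · rw [if_pos hik]
            have he : i = ⟨0, by omega⟩ := Fin.ext hik
            rw [he]; exact ha0
          · rw [if_neg hik]
            exact tailzero ⟨1, by omega⟩ (show 1+2 ≤ m by omega) ha1 i
              (Fin.le_def.mpr (show (1:ℕ) ≤ i.1 by omega))
        · -- a1 = 1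
          have ha1 : a ⟨1, by omega⟩ = 1 := by rw [hz1, h1]; norm_num
          rcases bin ⟨2, by omega⟩ (show 2+2 ≤ m by omega)
              (by rw [← ha1]
                  exact hmono ⟨1, by omega⟩ ⟨2, by omega⟩ (Fin.mk_le_mk.mpr (by omega)))
              with h2 | h2
          · -- a = twoEps1Eps2
            left; right; right; right; right; left
            funext i
            rw [twoEps1Eps2]
            by_cases hik : i.1 = 0
            · rw [if_pos hik]
              have he : i = ⟨0, by omega⟩ := Fin.ext hik
              rw [he]; exact ha0
            · rw [if_neg hik]
              by_cases hik1 : i.1 = 1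
              · rw [if_pos hik1]
                have he : i = ⟨1, by omega⟩ := Fin.ext hik1
                rw [he]; exact ha1
              · rw [if_neg hik1]
                exact tailzero ⟨2, by omega⟩ (show 2+2 ≤ m by omega) h2 i
                  (Fin.le_def.mpr (show (2:ℕ) ≤ i.1 by omega))
          · -- a2 = 1 : contradiction
            exfalso
            have tn3 := tnonneg ⟨3, by omega⟩
            have tn4 := tnonneg ⟨4, by omega⟩
            norm_num at tn3 tn4
            rw [ha0, ha1, h2] at key5
            nlinarith [key5, hC, tn3, tn4, hN14Q]
        · -- a1 = 2 : contradiction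
          exfalso
          have ha1 : a ⟨1, by omega⟩ = 2 := by rw [hz1, h1]; norm_num
          have tn2 := tnonneg ⟨2, by omega⟩
          have tn3 := tnonneg ⟨3, by omega⟩
          have tn4 := tnonneg ⟨4, by omega⟩
          norm_num at tn2 tn3 tn4
          rw [ha0, ha1] at key5
          nlinarith [key5, hC, tn2, tn3, tn4, hN14Q]
    · -- half-integer case
      have halflow : ∀ i : Fin m, 0 ≤ a i → 1/2 ≤ a i := by
        intro i h
        obtain ⟨z, hzi⟩ := hz i
        have h1 : (0:ℚ) ≤ (z:ℚ) + 1/2 := hzi ▸ h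
        have h2 : (-1:ℤ) < z := by
          by_contra hcon
          push_neg at hcon
          have : (z:ℚ) ≤ -1 := by exact_mod_cast hcon
          linarith
        have h3 : (0:ℚ) ≤ (z:ℚ) := by exact_mod_cast (show (0:ℤ) ≤ z by omega)
        rw [hzi]; linarith
      have termbound : ∀ i : Fin m,
          (1/2:ℚ)*(1/2 + (N:ℚ) - 2*((i.1:ℚ)+1)) ≤ a i * (a i + (N:ℚ) - 2*((i.1:ℚ)+1)) := by
        intro i
        by_cases hi : i.1 + 2 ≤ m
        · have h1 := halflow i (nonneg i hi)
          have h2 : 2*((i.1:ℚ)+1) ≤ N := by exact_mod_cast (show 2*(i.1+1) ≤ N by omega)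
          nlinarith [mul_nonneg (by linarith : (0:ℚ) ≤ a i - 1/2)
            (by linarith : (0:ℚ) ≤ a i + 1/2 + ((N:ℚ) - 2*((i.1:ℚ)+1)))]
        · have hi' : i.1 = m - 1 := by omega
          rcases hNm with h | h
          · have h2 : (N:ℚ) = 2*((i.1:ℚ)+1) := by exact_mod_cast (show N = 2*(i.1+1) by omega)
            obtain ⟨z, hzi⟩ := hz i
            have h3 := int_mul_succ_nonneg z
            have e1 : a i * (a i + (N:ℚ) - 2*((i.1:ℚ)+1)) = (z:ℚ)*((z:ℚ)+1) + 1/4 := by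
              rw [hzi, h2]; ring
            have e2 : (1/2:ℚ)*(1/2 + (N:ℚ) - 2*((i.1:ℚ)+1)) = 1/4 := by rw [h2]; ring
            rw [e1, e2]; linarith
          · have h2 : (N:ℚ) = 2*((i.1:ℚ)+1) + 1 := by
              exact_mod_cast (show N = 2*(i.1+1) + 1 by omega)
            have h3 : 0 ≤ a i := by
              have h4 := hodd ⟨m, by omega⟩ (by omega)
              have h5 : i = ⟨m-1, by omega⟩ := Fin.ext hi'
              rw [h5]; exact h4
            have h4 := halflow i h3
            have e1 : a i * (a i + (N:ℚ) - 2*((i.1:ℚ)+1)) = a i * (a i + 1) := by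
              rw [h2]; ring
            have e2 : (1/2:ℚ)*(1/2 + (N:ℚ) - 2*((i.1:ℚ)+1)) = 3/4 := by rw [h2]; ring
            rw [e1, e2]
            nlinarith [mul_nonneg (by linarith : (0:ℚ) ≤ a i - 1/2)
              (by linarith : (0:ℚ) ≤ a i + 3/2)]
      have hsum : (m:ℚ)*((N:ℚ)/2 - 3/4) - (m:ℚ)*((m:ℚ)-1)/2
          ≤ ∑ i : Fin m, a i * (a i + (N:ℚ) - 2*((i.1:ℚ)+1)) := by
        rw [← boundSum N m]
        exact Finset.sum_le_sum (fun i _ => termbound i)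
      rcases hN with h14 | h20 | h26
      · -- N = 14, m = 7
        have hNQ : (N:ℚ) = 14 := by rw [h14]; norm_num
        have hm7' : m = 7 := by omega
        subst hm7'
        obtain ⟨z0, hz0⟩ := hz ⟨0, by omega⟩
        have l0 : (1/2:ℚ) ≤ a ⟨0, by omega⟩ := halflow _ (nonneg _ (show 0+2 ≤ 7 by omega))
        have h00 : (0:ℤ) ≤ z0 := by
          have : (0:ℚ) ≤ (z0:ℚ) := by rw [hz0] at l0; linarith
          exact_mod_cast this
        have hlow := sum_lower1 (fun i : Fin 7 => a i * (a i + (N:ℚ) - 2*((i.1:ℚ)+1)))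
          (fun i : Fin 7 => (1/2:ℚ)*(1/2 + (N:ℚ) - 2*((i.1:ℚ)+1))) termbound ⟨0, by omega⟩
        rw [boundSum N 7] at hlow
        norm_num at hlow
        have habs := heven ⟨7, by omega⟩ (by omega)
        norm_num at habs
        rcases (show z0 = 0 ∨ z0 = 1 ∨ 2 ≤ z0 by omega) with h0 | h0 | h0
        · -- a0 = 1/2 : spin representations
          have ha0 : a ⟨0, by omega⟩ = 1/2 := by rw [hz0, h0]; norm_num
          have hcoord : ∀ i : Fin 7, i.1 ≤ 5 → a i = 1/2 := by
            intro i hi5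
            refine le_antisymm ?_ (halflow _ (nonneg _ (by omega)))
            rw [← ha0]
            exact hmono ⟨0, by omega⟩ i (Fin.le_def.mpr (show (0:ℕ) ≤ i.1 by omega))
          have h5v : a ⟨5, by omega⟩ = 1/2 := hcoord ⟨5, by omega⟩ (show (5:ℕ) ≤ 5 by omega)
          rw [h5v] at habs
          obtain ⟨z6, hz6⟩ := hz ⟨6, by omega⟩
          have h6r := abs_le.mp habs
          have h6c : z6 = -1 ∨ z6 = 0 := by
            obtain ⟨hr1, hr2⟩ := h6r
            rw [hz6] at hr1 hr2
            have hr1' : (-1:ℚ) ≤ (z6:ℚ) := by linarith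
            have hr2' : (z6:ℚ) ≤ 0 := by linarith
            have : (-1:ℤ) ≤ z6 := by exact_mod_cast hr1'
            have : z6 ≤ 0 := by exact_mod_cast hr2'
            omega
          rcases h6c with h6 | h6
          · -- spinMinus
            have hv6 : a ⟨6, by omega⟩ = -(1/2) := by rw [hz6, h6]; norm_num
            right; left
            refine ⟨h14, Or.inr (Or.inr (Or.inl ?_))⟩
            funext i
            rw [spinMinus]
            by_cases e6 : i.1 = 7 - 1
            · rw [if_pos e6]
              have he : i = ⟨6, by omega⟩ := Fin.ext (show i.1 = 6 by omega)
              rw [he]; exact hv6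
            · rw [if_neg e6]
              exact hcoord i (by omega)
          · -- spinPlus
            have hv6 : a ⟨6, by omega⟩ = 1/2 := by rw [hz6, h6]; norm_num
            right; left
            refine ⟨h14, Or.inr (Or.inl ?_)⟩
            funext i
            rw [spinPlus]
            by_cases e6 : i.1 = 6
            · have he : i = ⟨6, by omega⟩ := Fin.ext e6
              rw [he]; exact hv6
            · exact hcoord i (by omega)
        · -- a0 = 3/2
          have ha0 : a ⟨0, by omega⟩ = 3/2 := by rw [hz0, h0]; norm_num
          obtain ⟨z1, hz1⟩ := hz ⟨1, by omega⟩
          have l1 : (1/2:ℚ) ≤ a ⟨1, by omega⟩ := halflow _ (nonneg _ (show 1+2 ≤ 7 by omega))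
          have u1 : a ⟨1, by omega⟩ ≤ 3/2 := by
            rw [← ha0]
            exact hmono ⟨0, by omega⟩ ⟨1, by omega⟩ (Fin.mk_le_mk.mpr (by omega))
          have h10 : z1 = 0 ∨ z1 = 1 := by
            rw [hz1] at l1 u1
            have e1' : (0:ℤ) ≤ z1 := by exact_mod_cast (show (0:ℚ) ≤ (z1:ℚ) by linarith)
            have e2' : z1 ≤ 1 := by exact_mod_cast (show (z1:ℚ) ≤ 1 by linarith)
            omega
          rcases h10 with h1 | h1
          · -- a1 = 1/2 : eps1Spin±
            have ha1 : a ⟨1, by omega⟩ = 1/2 := by rw [hz1, h1]; norm_num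
            have hcoord : ∀ i : Fin 7, 1 ≤ i.1 → i.1 ≤ 5 → a i = 1/2 := by
              intro i hi1 hi5
              refine le_antisymm ?_ (halflow _ (nonneg _ (by omega)))
              rw [← ha1]
              exact hmono ⟨1, by omega⟩ i (Fin.le_def.mpr (show (1:ℕ) ≤ i.1 from hi1))
            have h5v : a ⟨5, by omega⟩ = 1/2 :=
              hcoord ⟨5, by omega⟩ (show (1:ℕ) ≤ 5 by omega) (show (5:ℕ) ≤ 5 by omega)
            rw [h5v] at habs
            obtain ⟨z6, hz6⟩ := hz ⟨6, by omega⟩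
            have h6r := abs_le.mp habs
            have h6c : z6 = -1 ∨ z6 = 0 := by
              obtain ⟨hr1, hr2⟩ := h6r
              rw [hz6] at hr1 hr2
              have : (-1:ℤ) ≤ z6 := by exact_mod_cast (show (-1:ℚ) ≤ (z6:ℚ) by linarith)
              have : z6 ≤ 0 := by exact_mod_cast (show (z6:ℚ) ≤ 0 by linarith)
              omega
            rcases h6c with h6 | h6
            · -- eps1SpinMinus
              have hv6 : a ⟨6, by omega⟩ = -(1/2) := by rw [hz6, h6]; norm_num
              right; left
              refine ⟨h14, Or.inr (Or.inr (Or.inr (Or.inr ?_)))⟩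
              funext i
              rw [eps1SpinMinus]
              by_cases e0 : i.1 = 0
              · rw [if_pos e0]
                have he : i = ⟨0, by omega⟩ := Fin.ext e0
                rw [he]; exact ha0
              · rw [if_neg e0]
                by_cases e6 : i.1 = 7 - 1
                · rw [if_pos e6]
                  have he : i = ⟨6, by omega⟩ := Fin.ext (show i.1 = 6 by omega)
                  rw [he]; exact hv6
                · rw [if_neg e6]
                  exact hcoord i (by omega) (by omega)
            · -- eps1SpinPlus
              have hv6 : a ⟨6, by omega⟩ = 1/2 := by rw [hz6, h6]; norm_num
              right; left
              refine ⟨h14, Or.inr (Or.inr (Or.inr (Or.inl ?_)))⟩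
              funext i
              rw [eps1SpinPlus]
              by_cases e0 : i.1 = 0
              · rw [if_pos e0]
                have he : i = ⟨0, by omega⟩ := Fin.ext e0
                rw [he]; exact ha0
              · rw [if_neg e0]
                by_cases e6 : i.1 = 6
                · have he : i = ⟨6, by omega⟩ := Fin.ext e6
                  rw [he]; exact hv6
                · exact hcoord i (by omega) (by omega)
          · -- a1 = 3/2 : contradiction
            exfalso
            have ha1 : a ⟨1, by omega⟩ = 3/2 := by rw [hz1, h1]; norm_num
            have hlow2 := sum_lower2 (fun i : Fin 7 => a i * (a i + (N:ℚ) - 2*((i.1:ℚ)+1)))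
              (fun i : Fin 7 => (1/2:ℚ)*(1/2 + (N:ℚ) - 2*((i.1:ℚ)+1))) termbound
              ⟨0, by omega⟩ ⟨1, by omega⟩ (Fin.ne_of_val_ne (by norm_num))
            rw [boundSum N 7] at hlow2
            norm_num at hlow2
            have e0 : a (0 : Fin 7) = 3/2 := ha0
            have e1 : a (1 : Fin 7) = 3/2 := ha1
            rw [e0, e1] at hlow2
            nlinarith [hlow2, hC, hNQ]
        · -- a0 ≥ 5/2 : contradiction
          exfalso
          have ha0 : (5/2:ℚ) ≤ a ⟨0, by omega⟩ := by
            rw [hz0]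
            have : (2:ℚ) ≤ (z0:ℚ) := by exact_mod_cast h0
            linarith
          have e0 : (5/2:ℚ) ≤ a (0 : Fin 7) := ha0
          nlinarith [hlow, hC, hNQ, mul_nonneg
            (by linarith : (0:ℚ) ≤ a (0 : Fin 7) - 5/2)
            (by linarith : (0:ℚ) ≤ a (0 : Fin 7) + 29/2)]
      · -- N = 20, m = 10
        have hNQ : (N:ℚ) = 20 := by rw [h20]; norm_num
        have hm10 : m = 10 := by omega
        subst hm10
        obtain ⟨z0, hz0⟩ := hz ⟨0, by omega⟩
        have l0 : (1/2:ℚ) ≤ a ⟨0, by omega⟩ := halflow _ (nonneg _ (show 0+2 ≤ 10 by omega))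
        have h00 : (0:ℤ) ≤ z0 := by
          have : (0:ℚ) ≤ (z0:ℚ) := by rw [hz0] at l0; linarith
          exact_mod_cast this
        rcases (show z0 = 0 ∨ 1 ≤ z0 by omega) with h0 | h0
        · -- a0 = 1/2 : spin representations
          have ha0 : a ⟨0, by omega⟩ = 1/2 := by rw [hz0, h0]; norm_num
          have hcoord : ∀ i : Fin 10, i.1 ≤ 8 → a i = 1/2 := by
            intro i hi8
            refine le_antisymm ?_ (halflow _ (nonneg _ (by omega)))
            rw [← ha0]
            exact hmono ⟨0, by omega⟩ i (Fin.le_def.mpr (show (0:ℕ) ≤ i.1 by omega))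
          have habs := heven ⟨10, by omega⟩ (by omega)
          norm_num at habs
          have h8v : a ⟨8, by omega⟩ = 1/2 := hcoord ⟨8, by omega⟩ (show (8:ℕ) ≤ 8 by omega)
          rw [h8v] at habs
          obtain ⟨z9, hz9⟩ := hz ⟨9, by omega⟩
          have h9r := abs_le.mp habs
          have h9c : z9 = -1 ∨ z9 = 0 := by
            obtain ⟨hr1, hr2⟩ := h9r
            rw [hz9] at hr1 hr2
            have : (-1:ℤ) ≤ z9 := by exact_mod_cast (show (-1:ℚ) ≤ (z9:ℚ) by linarith)
            have : z9 ≤ 0 := by exact_mod_cast (show (z9:ℚ) ≤ 0 by linarith)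
            omega
          rcases h9c with h9 | h9
          · -- spinMinus
            have hv9 : a ⟨9, by omega⟩ = -(1/2) := by rw [hz9, h9]; norm_num
            right; right
            refine ⟨h20, Or.inr ?_⟩
            funext i
            rw [spinMinus]
            by_cases e9 : i.1 = 10 - 1
            · rw [if_pos e9]
              have he : i = ⟨9, by omega⟩ := Fin.ext (show i.1 = 9 by omega)
              rw [he]; exact hv9
            · rw [if_neg e9]
              exact hcoord i (by omega)
          · -- spinPlus
            have hv9 : a ⟨9, by omega⟩ = 1/2 := by rw [hz9, h9]; norm_num
            right; right
            refine ⟨h20, Or.inl ?_⟩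
            funext i
            rw [spinPlus]
            by_cases e9 : i.1 = 9
            · have he : i = ⟨9, by omega⟩ := Fin.ext e9
              rw [he]; exact hv9
            · exact hcoord i (by omega)
        · -- a0 ≥ 3/2 : contradiction
          exfalso
          have ha0 : (3/2:ℚ) ≤ a ⟨0, by omega⟩ := by
            rw [hz0]
            have : (1:ℚ) ≤ (z0:ℚ) := by exact_mod_cast h0
            linarith
          have hlow := sum_lower1 (fun i : Fin 10 => a i * (a i + (N:ℚ) - 2*((i.1:ℚ)+1)))
            (fun i : Fin 10 => (1/2:ℚ)*(1/2 + (N:ℚ) - 2*((i.1:ℚ)+1))) termbound ⟨0, by omega⟩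
          rw [boundSum N 10] at hlow
          norm_num at hlow
          have e0 : (3/2:ℚ) ≤ a (0 : Fin 10) := ha0
          nlinarith [hlow, hC, hNQ, mul_nonneg
            (by linarith : (0:ℚ) ≤ a (0 : Fin 10) - 3/2)
            (by linarith : (0:ℚ) ≤ a (0 : Fin 10) + 39/2)]
      · -- 26 ≤ N : contradiction
        exfalso
        have hm13 : (13:ℚ) ≤ (m:ℚ) := by exact_mod_cast (show 13 ≤ m by omega)
        rcases hNm with h | h
        · have hNQ : (N:ℚ) = 2*(m:ℚ) := by exact_mod_cast h
          nlinarith [hsum, hC, mul_self_nonneg ((m:ℚ) - 13)]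
        · have hNQ : (N:ℚ) = 2*(m:ℚ) + 1 := by exact_mod_cast h
          nlinarith [hsum, hC, mul_self_nonneg ((m:ℚ) - 13)]
  · intro h
    rcases h with (h | h | h | h | h | h) | ⟨h14, h⟩ | ⟨h20, h⟩
    · rw [h]
      have : casimirSO N (0 : Fin m → ℚ) = 0 := by simp [casimirSO]
      rw [this]; positivity
    · rw [h, casimir_epsSum1 N m (by omega)]; linarith
    · rw [h, casimir_twoEps1 N m (by omega)]; linarith
    · rw [h, casimir_epsSum2 N m (by omega)]; linarith
    · rw [h, casimir_twoEps1Eps2 N m (by omega)]; linarith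
    · rw [h, casimir_epsSum3 N m (by omega)]; linarith
    · subst h14
      have hm7' : m = 7 := by omega
      subst hm7'
      rcases h with h | h | h | h | h <;> rw [h] <;>
        norm_num [casimirSO, epsSum, spinPlus, spinMinus, eps1SpinPlus, eps1SpinMinus,
          Fin.sum_univ_succ]
    · subst h20
      have hm10 : m = 10 := by omega
      subst hm10
      rcases h with h | h <;> rw [h] <;>
        norm_num [casimirSO, spinPlus, spinMinus, Fin.sum_univ_succ]
end

section
/- Let N ≥ 14 be an integer and let a = (a₁,…,a_m), m = ⌊N/2⌋, be a dominant so(N)-weight. Then C_N(a) = 3(N+1) if and only if a = 3ε₁, or N = 14 and a = ε₁+ε₂+ε₃+ε₄+ε₅, or N = 19 and a = ε₁+ε₂+ε₃+ε₄. -/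
/-!
Put `cᵢ = N - 2i`, which is `≥ 0` because `2m ≤ N`. Each summand `aᵢ(aᵢ + cᵢ)` is increasing in
`aᵢ ≥ 0`, so `C_N` is strictly monotone on nonnegative weights. Replacing `a_m` by `|a_m|` does not
change `C_N` (for even `N` the coefficient `c_m` vanishes), so `a` may be taken nonnegative.

An integral weight either dominates `3ε₁`, whose Casimir number is exactly `3(N+1)`, or has all
entries in `{0, 1, 2}`; it is then `(ε₁ + ⋯ + ε_p) + (ε₁ + ⋯ + ε_q)` with `p ≤ q` and
`C_N = p(N+2-p) + q(N-q)`, and the equation `C_N = 3(N+1)` has only the two exceptional solutions.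

A half-integral weight is `s + x` with `s = (1/2, …, 1/2)` and `x` integral, and
`C_N(s + x) = m(2N-2m-1)/4 + C_{N+1}(x)`. The same dichotomy for `x` shows that `3(N+1)` is never
attained.
-/

open Finset

/-- The tuple `3ε₁`. -/
def threeEps1 (m : ℕ) : Fin m → ℚ := fun j => if j.1 = 0 then 3 else 0

theorem sum_range_sub_two_mul (A : ℚ) (k : ℕ) :
    ∑ i ∈ range k, (A - 2 * i) = k * (A - k + 1) := by
  induction k with
  | zero => simp
  | succ k ih => rw [sum_range_succ, ih]; push_cast; ring

theorem sum_epsSum_mul {m k : ℕ} (hk : k ≤ m) (f : ℕ → ℚ) :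
    ∑ i : Fin m, epsSum m k i * f i = ∑ i ∈ range k, f i := by
  simp only [epsSum, ite_mul, one_mul, zero_mul]
  rw [Fin.sum_univ_eq_sum_range (fun i => if i < k then f i else 0), ← sum_filter]
  congr 1
  ext i
  simp only [mem_filter, mem_range]
  omega

theorem epsSum_zero (m : ℕ) : epsSum m 0 = 0 := by
  funext i
  simp [epsSum]

theorem casimirSO_epsSum_add_epsSum (N : ℕ) {m p q : ℕ} (hpq : p ≤ q) (hq : q ≤ m) :
    casimirSO N (epsSum m p + epsSum m q) = p * (N + 2 - p) + q * (N - q) := by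
  have hterm : ∀ i : Fin m,
      (epsSum m p + epsSum m q) i * ((epsSum m p + epsSum m q) i + N - 2 * ((i : ℕ) + 1 : ℚ)) =
        epsSum m p i * ((N + 1 : ℚ) - 2 * (i : ℕ)) +
          epsSum m q i * ((N - 1 : ℚ) - 2 * (i : ℕ)) := by
    intro i
    simp only [Pi.add_apply, epsSum]
    split_ifs <;> first | omega | ring
  rw [casimirSO, sum_congr rfl fun i _ => hterm i, sum_add_distrib,
    sum_epsSum_mul (hpq.trans hq) fun i => (N + 1 : ℚ) - 2 * i,
    sum_epsSum_mul hq fun i => (N - 1 : ℚ) - 2 * i, sum_range_sub_two_mul, sum_range_sub_two_mul]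
  ring

theorem casimirSO_epsSum (N : ℕ) {m k : ℕ} (hk : k ≤ m) :
    casimirSO N (epsSum m k) = k * (N - k) := by
  simpa [epsSum_zero] using casimirSO_epsSum_add_epsSum N (Nat.zero_le k) hk

theorem casimirSO_half_add (N : ℕ) {m : ℕ} (x : Fin m → ℚ) :
    casimirSO N (fun i => 1 / 2 + x i) = m * (2 * N - 2 * m - 1) / 4 + casimirSO (N + 1) x := by
  have hterm : ∀ i : Fin m, (1 / 2 + x i) * (1 / 2 + x i + N - 2 * ((i : ℕ) + 1 : ℚ)) =
      ((N : ℚ) - 3 / 2 - 2 * (i : ℕ)) / 2 +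
        x i * (x i + ((N + 1 : ℕ) : ℚ) - 2 * ((i : ℕ) + 1)) := by
    intro i
    push_cast
    ring
  rw [casimirSO, casimirSO, sum_congr rfl fun i _ => hterm i, sum_add_distrib, ← sum_div,
    Fin.sum_univ_eq_sum_range (fun i => (N : ℚ) - 3 / 2 - 2 * i), sum_range_sub_two_mul]
  ring

theorem casimirSO_threeEps1 (N : ℕ) {m : ℕ} (hm : 0 < m) :
    casimirSO N (threeEps1 m) = 3 * (N + 1) := by
  rw [casimirSO, Fintype.sum_eq_single ⟨0, hm⟩ fun i hi => ?_]
  · simp only [threeEps1, if_pos, Nat.cast_zero]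
    ring
  · simp [threeEps1, Fin.ext_iff.not.mp hi]

theorem threeEps1_nonneg (m : ℕ) : 0 ≤ threeEps1 m := by
  intro i
  unfold threeEps1
  split_ifs <;> norm_num

section Monotone

variable {N m : ℕ} {a b : Fin m → ℚ}

theorem casimirSO_coeff_nonneg (hNm : 2 * m ≤ N) (i : Fin m) :
    (0 : ℚ) ≤ N - 2 * ((i : ℕ) + 1) := by
  have : (i : ℕ) + 1 ≤ m := i.2
  rw [sub_nonneg]
  exact_mod_cast (by omega : 2 * ((i : ℕ) + 1) ≤ N)

theorem casimirSO_term_le (hNm : 2 * m ≤ N) (i : Fin m) {x y : ℚ} (hx : 0 ≤ x) (hxy : x ≤ y) :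
    x * (x + N - 2 * ((i : ℕ) + 1)) ≤ y * (y + N - 2 * ((i : ℕ) + 1)) := by
  have hc := casimirSO_coeff_nonneg hNm i
  rw [add_sub_assoc, add_sub_assoc]
  exact mul_le_mul hxy (by linarith) (by linarith) (hx.trans hxy)

theorem casimirSO_term_lt (hNm : 2 * m ≤ N) (i : Fin m) {x y : ℚ} (hx : 0 ≤ x) (hxy : x < y) :
    x * (x + N - 2 * ((i : ℕ) + 1)) < y * (y + N - 2 * ((i : ℕ) + 1)) := by
  have hc := casimirSO_coeff_nonneg hNm i
  rw [add_sub_assoc, add_sub_assoc]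
  exact mul_lt_mul'' hxy (by linarith) hx (by linarith)

theorem casimirSO_le_casimirSO (hNm : 2 * m ≤ N) (hb : 0 ≤ b) (hba : b ≤ a) :
    casimirSO N b ≤ casimirSO N a :=
  sum_le_sum fun i _ => casimirSO_term_le hNm i (hb i) (hba i)

theorem casimirSO_lt_casimirSO (hNm : 2 * m ≤ N) (hb : 0 ≤ b) (hba : b < a) :
    casimirSO N b < casimirSO N a := by
  obtain ⟨hle, j, hj⟩ := Pi.lt_def.1 hba
  exact sum_lt_sum (fun i _ => casimirSO_term_le hNm i (hb i) (hle i))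
    ⟨j, mem_univ j, casimirSO_term_lt hNm j (hb j) hj⟩

end Monotone

theorem Antitone.exists_forall_le_iff_lt {α : Type*} [Preorder α] {m : ℕ} {a : Fin m → α}
    (ha : Antitone a) (c : α) : ∃ k ≤ m, ∀ i : Fin m, c ≤ a i ↔ (i : ℕ) < k := by
  classical
  have hex : ∃ n, ∀ i : Fin m, n ≤ (i : ℕ) → ¬c ≤ a i := ⟨m, fun i h => absurd i.2 (by omega)⟩
  refine ⟨Nat.find hex, Nat.find_le fun i h => absurd i.2 (by omega),
    fun i => ⟨fun hi => ?_, fun hi => ?_⟩⟩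
  · by_contra h
    exact Nat.find_spec hex i (not_lt.1 h) hi
  · obtain ⟨j, hij, hj⟩ : ∃ j : Fin m, (i : ℕ) ≤ j ∧ c ≤ a j := by
      simpa using Nat.find_min hex hi
    exact hj.trans (ha (Fin.le_def.2 hij))

theorem exists_eq_epsSum_add_epsSum {m : ℕ} {a : Fin m → ℚ} (ha : Antitone a)
    (h012 : ∀ i, a i = 0 ∨ a i = 1 ∨ a i = 2) :
    ∃ p q, p ≤ q ∧ q ≤ m ∧ a = epsSum m p + epsSum m q := by
  obtain ⟨p, hpm, hp⟩ := ha.exists_forall_le_iff_lt 2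
  obtain ⟨q, hqm, hq⟩ := ha.exists_forall_le_iff_lt 1
  have hpq : p ≤ q := by
    by_contra! h
    have h2 : 2 ≤ a ⟨q, by omega⟩ := (hp _).2 h
    exact lt_irrefl q ((hq ⟨q, by omega⟩).1 (one_le_two.trans h2))
  refine ⟨p, q, hpq, hqm, funext fun i => ?_⟩
  have h2 := hp i
  have h1 := hq i
  simp only [Pi.add_apply, epsSum]
  rcases h012 i with h | h | h <;> rw [h] at h1 h2 ⊢ <;> norm_num at h1 h2 <;> split_ifs <;>
    first | omega | norm_num

theorem threeEps1_le_or_exists_eq_epsSum_add_epsSum {m : ℕ} (hm : 0 < m) {x : Fin m → ℚ}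
    (hx : Antitone x) (hx0 : 0 ≤ x) (hint : ∀ i, ∃ z : ℤ, x i = z) :
    threeEps1 m ≤ x ∨ ∃ p q, p ≤ q ∧ q ≤ m ∧ x = epsSum m p + epsSum m q := by
  by_cases h3 : 3 ≤ x ⟨0, hm⟩
  · left
    intro i
    unfold threeEps1
    split_ifs with hi
    · rwa [show i = ⟨0, hm⟩ from Fin.ext hi]
    · exact hx0 i
  · refine .inr (exists_eq_epsSum_add_epsSum hx fun i => ?_)
    obtain ⟨z, hz⟩ := hint i
    have hlt : (z : ℚ) < 3 := hz ▸ (hx (Fin.le_def.2 (Nat.zero_le i))).trans_lt (not_le.1 h3)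
    have hge : (0 : ℚ) ≤ z := hz ▸ hx0 i
    have : z = 0 ∨ z = 1 ∨ z = 2 := by
      have : z < 3 := by exact_mod_cast hlt
      have : 0 ≤ z := by exact_mod_cast hge
      omega
    rcases this with rfl | rfl | rfl <;> simp [hz]

theorem casimir_integral_equation_solutions {N p q : ℕ} (hN : 14 ≤ N) (hpq : p ≤ q)
    (hqN : 2 * q ≤ N)
    (h : (p : ℚ) * (N + 2 - p) + q * (N - q) = 3 * (N + 1)) :
    p = 0 ∧ (q = 5 ∧ N = 14 ∨ q = 4 ∧ N = 19) := by
  have h' : (p : ℤ) * (N + 2 - p) + q * (N - q) = 3 * (N + 1) := by exact_mod_cast h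
  have hq : q ≤ 6 := by
    by_contra! hq
    have : (0 : ℤ) ≤ (q - 7) * (N - q - 7) := mul_nonneg (by omega) (by omega)
    have : (0 : ℤ) ≤ p * (N + 2 - p) := mul_nonneg (by omega) (by omega)
    nlinarith
  interval_cases q <;> interval_cases p <;> omega

theorem casimir_half_integral_equation_no_solution {N m p q : ℕ} (hm : 7 ≤ m) (hNm : 2 * m ≤ N)
    (hNm' : N ≤ 2 * m + 1) (hpq : p ≤ q) (hqm : q ≤ m) :
    (m : ℚ) * (2 * N - 2 * m - 1) / 4 + (p * (N + 1 + 2 - p) + q * (N + 1 - q)) ≠ 3 * (N + 1) := by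
  intro h
  have h' : (m : ℤ) * (2 * N - 2 * m - 1) + 4 * p * (N + 3 - p) + 4 * q * (N + 1 - q)
      = 12 * (N + 1) := by
    have : ((m * (2 * N - 2 * m - 1) + 4 * p * (N + 3 - p) + 4 * q * (N + 1 - q) : ℤ) : ℚ)
        = ((12 * (N + 1) : ℤ) : ℚ) := by
      push_cast
      linarith
    exact_mod_cast this
  have hp0 : (0 : ℤ) ≤ p * (N + 3 - p) := mul_nonneg (by omega) (by omega)
  have hq0 : (0 : ℤ) ≤ q * (N + 1 - q) := mul_nonneg (by omega) (by omega)
  have hm12 : m ≤ 12 := by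
    by_contra! hm
    have : (0 : ℤ) ≤ (m - 13) * (2 * N - 2 * m - 1) := mul_nonneg (by omega) (by omega)
    nlinarith
  have hq2 : q ≤ 2 := by
    by_contra! hq
    have : (0 : ℤ) ≤ (q - 3) * (N - 2 - q) := mul_nonneg (by omega) (by omega)
    have : (0 : ℤ) ≤ (m - 7) * (2 * N - 2 * m - 14) := mul_nonneg (by omega) (by omega)
    nlinarith
  interval_cases m <;> interval_cases N <;> interval_cases q <;> interval_cases p <;> omega

theorem eq_of_casimirSO_eq_of_integral {N m : ℕ} (hN : 14 ≤ N) (hNm : 2 * m ≤ N) (hm : 0 < m)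
    {a : Fin m → ℚ} (ha : Antitone a) (ha0 : 0 ≤ a) (hint : ∀ i, ∃ z : ℤ, a i = z)
    (hC : casimirSO N a = 3 * (N + 1)) :
    a = threeEps1 m ∨ (N = 14 ∧ a = epsSum m 5) ∨ (N = 19 ∧ a = epsSum m 4) := by
  rcases threeEps1_le_or_exists_eq_epsSum_add_epsSum hm ha ha0 hint with h3 | ⟨p, q, hpq, hqm, rfl⟩
  · refine .inl (h3.lt_or_eq.resolve_left fun hlt => ?_).symm
    have := casimirSO_lt_casimirSO hNm (threeEps1_nonneg m) hlt
    rw [casimirSO_threeEps1 N hm, hC] at this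
    exact lt_irrefl _ this
  · rw [casimirSO_epsSum_add_epsSum N hpq hqm] at hC
    obtain ⟨rfl, ⟨rfl, rfl⟩ | ⟨rfl, rfl⟩⟩ :=
      casimir_integral_equation_solutions hN hpq (by omega) hC <;> simp [epsSum_zero]

theorem casimirSO_ne_of_half_integral {N m : ℕ} (hm : 7 ≤ m) (hNm : 2 * m ≤ N)
    (hNm' : N ≤ 2 * m + 1) {a : Fin m → ℚ} (ha : Antitone a) (ha0 : 0 ≤ a)
    (hhalf : ∀ i, ∃ z : ℤ, a i = z + 1 / 2) : casimirSO N a ≠ 3 * (N + 1) := by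
  obtain ⟨x, rfl⟩ : ∃ x : Fin m → ℚ, a = fun i => 1 / 2 + x i :=
    ⟨fun i => a i - 1 / 2, funext fun i => by ring⟩
  have hx : Antitone x := fun i j h => le_of_add_le_add_left (ha h)
  have hxint : ∀ i, ∃ z : ℤ, x i = z := fun i => by
    obtain ⟨z, hz⟩ := hhalf i
    exact ⟨z, by linarith⟩
  have hx0 : 0 ≤ x := fun i => by
    obtain ⟨z, hz⟩ := hxint i
    have : (-1 : ℤ) < z := by
      have : (-1 : ℚ) < z := by linarith [show (0 : ℚ) ≤ 1 / 2 + x i from ha0 i]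
      exact_mod_cast this
    have : (0 : ℚ) ≤ z := by exact_mod_cast (by omega : 0 ≤ z)
    rw [Pi.zero_apply, hz]
    exact this
  have hC0 : (0 : ℚ) ≤ m * (2 * N - 2 * m - 1) / 4 := by
    have : (2 * m + 1 : ℚ) ≤ 2 * N := by exact_mod_cast (by omega : 2 * m + 1 ≤ 2 * N)
    have : (0 : ℚ) ≤ m := m.cast_nonneg
    have : (0 : ℚ) ≤ 2 * N - 2 * m - 1 := by linarith
    positivity
  rw [casimirSO_half_add]
  rcases threeEps1_le_or_exists_eq_epsSum_add_epsSum (by omega) hx hx0 hxint with h3 |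
    ⟨p, q, hpq, hqm, rfl⟩
  · have := casimirSO_le_casimirSO (N := N + 1) (by omega) (threeEps1_nonneg m) h3
    rw [casimirSO_threeEps1 _ (by omega)] at this
    push_cast at this
    intro h
    linarith
  · rw [casimirSO_epsSum_add_epsSum _ hpq hqm]
    push_cast
    exact casimir_half_integral_equation_no_solution hm hNm hNm' hpq hqm

namespace IsDominantSO

variable {N m : ℕ} {a : Fin m → ℚ}

theorem antitone (ha : IsDominantSO N m a) : Antitone a := ha.2.1

theorem abs_last_le (ha : IsDominantSO N m a) (i : Fin m) (hi : (i : ℕ) + 1 < m) :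
    |a ⟨m - 1, by omega⟩| ≤ a i := by
  rcases Nat.even_or_odd N with hN | hN
  · exact (ha.2.2.2 hN (by omega)).trans (ha.antitone (Fin.le_def.2 (by simp only; omega)))
  · rw [abs_of_nonneg (ha.2.2.1 hN (by omega))]
    exact ha.antitone (Fin.le_def.2 (by simp only; omega))

theorem nonneg_of_lt_last (ha : IsDominantSO N m a) (i : Fin m) (hi : (i : ℕ) + 1 < m) :
    0 ≤ a i :=
  (abs_nonneg _).trans (ha.abs_last_le i hi)

theorem antitone_abs (ha : IsDominantSO N m a) : Antitone fun i => |a i| := by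
  intro i j hij
  dsimp only
  by_cases hj : (j : ℕ) + 1 < m
  · rw [abs_of_nonneg (ha.nonneg_of_lt_last j hj)]
    exact (ha.antitone hij).trans (le_abs_self _)
  · rcases hij.lt_or_eq with hlt | rfl
    · rw [show j = ⟨m - 1, by omega⟩ from Fin.ext (by simp only; omega)]
      exact (ha.abs_last_le i (by rw [Fin.lt_def] at hlt; omega)).trans (le_abs_self _)
    · exact le_rfl

theorem casimirSO_abs (ha : IsDominantSO N m a) (hm : m = N / 2) :
    casimirSO N (fun i => |a i|) = casimirSO N a := by
  refine sum_congr rfl fun i _ => ?_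
  dsimp only
  by_cases hi : (i : ℕ) + 1 < m
  · rw [abs_of_nonneg (ha.nonneg_of_lt_last i hi)]
  rcases Nat.even_or_odd N with hN | hN
  · have hc : (N : ℚ) - 2 * ((i : ℕ) + 1) = 0 := by
      have : N = 2 * ((i : ℕ) + 1) := by
        obtain ⟨t, ht⟩ := hN
        omega
      rw [this]
      push_cast
      ring
    rw [add_sub_assoc, add_sub_assoc, hc, add_zero, add_zero, abs_mul_abs_self]
  · rw [show i = ⟨m - 1, by omega⟩ from Fin.ext (by simp only; omega),
      abs_of_nonneg (ha.2.2.1 hN (by omega))]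

theorem abs_integral (ha : IsDominantSO N m a) :
    (∀ i, ∃ z : ℤ, |a i| = z) ∨ (∀ i, ∃ z : ℤ, |a i| = z + 1 / 2) := by
  rcases ha.1 with h | h
  · refine .inl fun i => ?_
    obtain ⟨z, hz⟩ := h i
    exact ⟨|z|, by rw [hz, Int.cast_abs]⟩
  · refine .inr fun i => ?_
    obtain ⟨z, hz⟩ := h i
    rcases le_or_gt 0 z with hz0 | hz0
    · have : (0 : ℚ) ≤ z := by exact_mod_cast hz0
      exact ⟨z, by rw [hz, abs_of_nonneg (by linarith)]⟩
    · have : (z : ℚ) ≤ -1 := by exact_mod_cast (by omega : z ≤ -1)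
      exact ⟨-z - 1, by rw [hz, abs_of_neg (by linarith)]; push_cast; ring⟩

end IsDominantSO

/-- for `N ≥ 14`, `m = ⌊N/2⌋` and a dominant `so(N)`-weight `a`,
one has `C_N(a) = 3(N+1)` iff `a = 3ε₁`, or `N = 14` and
`a = ε₁+ε₂+ε₃+ε₄+ε₅`, or `N = 19` and `a = ε₁+ε₂+ε₃+ε₄`. -/
theorem stmt3 (N m : ℕ) (hN : 14 ≤ N) (hm : m = N / 2)
    (a : Fin m → ℚ) (ha : IsDominantSO N m a) :
    casimirSO N a = 3 * ((N : ℚ) + 1) ↔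
      a = threeEps1 m ∨
      (N = 14 ∧ a = epsSum m 5) ∨
      (N = 19 ∧ a = epsSum m 4) := by
  have hm7 : 7 ≤ m := by omega
  constructor
  · intro hC
    have habsC : casimirSO N (fun i => |a i|) = 3 * ((N : ℚ) + 1) :=
      (ha.casimirSO_abs hm).trans hC
    have hres := ha.abs_integral.elim
      (fun hint => eq_of_casimirSO_eq_of_integral hN (by omega) (by omega) ha.antitone_abs
        (fun i => abs_nonneg (a i)) hint habsC)
      (fun hhalf => absurd habsC (casimirSO_ne_of_half_integral hm7 (by omega) (by omega)
        ha.antitone_abs (fun i => abs_nonneg (a i)) hhalf))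
    have hlast : |a ⟨m - 1, by omega⟩| = 0 := by
      rcases hres with h | ⟨-, h⟩ | ⟨-, h⟩ <;> rw [congrFun h] <;>
        simp only [threeEps1, epsSum, ite_eq_right_iff, OfNat.ofNat_ne_zero, one_ne_zero,
          imp_false, not_lt] <;> omega
    suffices (fun i => |a i|) = a by rwa [this] at hres
    have hlast0 : 0 ≤ a ⟨m - 1, by omega⟩ := (abs_eq_zero.1 hlast).symm.le
    exact funext fun i =>
      abs_of_nonneg (hlast0.trans (ha.antitone (Fin.le_def.2 (by simp only; omega))))
  · rintro (rfl | ⟨rfl, rfl⟩ | ⟨rfl, rfl⟩)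
    · exact casimirSO_threeEps1 N (by omega)
    · rw [casimirSO_epsSum 14 (by omega)]
      norm_num
    · rw [casimirSO_epsSum 19 (by omega)]
      norm_num
end

section
/- Let n ≥ 3 be an integer and let a = (a₁,…,aₙ) be a tuple of integers with a₁ ≥ ⋯ ≥ aₙ ≥ 0 and a₁+⋯+aₙ even. Then C′_n(a) < 8n+4 if and only if a is one of: the zero tuple; 2ε₁; ε₁+ε₂; 2ε₁+ε₂+ε₃; ε₁+ε₂+ε₃+ε₄ provided n ≥ 4; ε₁+ε₂+ε₃+ε₄+ε₅+ε₆ provided n = 6. (Here 8n+4 = C′_n(2ε₁+2ε₂).) -/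
open Finset

/-- The Casimir number `C′_n(a) = Σ_{i=1}^{n} aᵢ(aᵢ + 2n + 2 − 2i)` for `sp(n)`. -/
def casimirSp (n : ℕ) (a : Fin n → ℤ) : ℤ :=
  ∑ i : Fin n, a i * (a i + 2 * (n : ℤ) + 2 - 2 * ((i.1 : ℤ) + 1))

/-- The tuple `ε₁ + ⋯ + ε_k` (integer entries). -/
def epsSumZ (n k : ℕ) : Fin n → ℤ := fun j => if (j.1 : ℕ) < k then 1 else 0

/-- The tuple `2ε₁`. -/
def twoEps1Z (n : ℕ) : Fin n → ℤ := fun j => if j.1 = 0 then 2 else 0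

/-- The tuple `2ε₁ + ε₂ + ε₃`. -/
def twoEps1Eps2Eps3Z (n : ℕ) : Fin n → ℤ :=
  fun j => if j.1 = 0 then 2 else if j.1 < 3 then 1 else 0

lemma fin_ne {n : ℕ} {i j : Fin n} (h : i.1 ≠ j.1) : i ≠ j := fun e => h (congrArg Fin.val e)

lemma sum_prefix (n m : ℕ) (hm : m ≤ n) (g : ℕ → ℤ) (hg : ∀ i, m ≤ i → g i = 0) :
    ∑ i ∈ range n, g i = ∑ i ∈ range m, g i :=
  (Finset.sum_subset (Finset.range_subset_range.2 hm)
    (fun x _ hx => hg x (by simpa using hx))).symm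

lemma casimir_eq (n : ℕ) (f : ℕ → ℤ) (a : Fin n → ℤ) (ha : ∀ i : Fin n, a i = f i.1) :
    casimirSp n a = ∑ i ∈ Finset.range n, f i * (f i + 2 * (n : ℤ) + 2 - 2 * ((i : ℤ) + 1)) := by
  rw [← Fin.sum_univ_eq_sum_range (fun i => f i * (f i + 2 * (n : ℤ) + 2 - 2 * ((i : ℤ) + 1))) n]
  exact Finset.sum_congr rfl fun i _ => by rw [ha i]

lemma sum_eq (n : ℕ) (f : ℕ → ℤ) (a : Fin n → ℤ) (ha : ∀ i : Fin n, a i = f i.1) :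
    ∑ i, a i = ∑ i ∈ Finset.range n, f i := by
  rw [← Fin.sum_univ_eq_sum_range f n]
  exact Finset.sum_congr rfl fun i _ => ha i

lemma sum_arith (N : ℤ) : ∀ k : ℕ, (∑ i ∈ Finset.range k, (N + 1 - 2 * (i : ℤ))) = k * (N + 2 - k)
  | 0 => by simp
  | (k + 1) => by
      rw [Finset.sum_range_succ, sum_arith N k]
      push_cast
      ring

lemma casimir_epsSum (n k : ℕ) (hk : k ≤ n) :
    casimirSp n (epsSumZ n k) = k * (2 * (n : ℤ) + 2 - k) := by
  rw [casimir_eq n (fun j => if j < k then 1 else 0) (epsSumZ n k) (fun i => rfl)]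
  rw [sum_prefix n k hk _ (fun i hi => by simp [Nat.not_lt.2 hi])]
  rw [Finset.sum_congr rfl (fun i hi => by
    rw [Finset.mem_range] at hi
    rw [if_pos hi]
    ring_nf : ∀ i ∈ Finset.range k, _ = 2 * (n:ℤ) + 1 - 2 * (i:ℤ))]
  exact sum_arith (2 * (n : ℤ)) k

lemma sum_epsSum (n k : ℕ) (hk : k ≤ n) : (∑ i, epsSumZ n k i) = (k : ℤ) := by
  rw [sum_eq n (fun j => if j < k then 1 else 0) (epsSumZ n k) (fun i => rfl),
      sum_prefix n k hk _ (fun i hi => by simp [Nat.not_lt.2 hi]),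
      Finset.sum_congr rfl (fun i hi => if_pos (Finset.mem_range.1 hi))]
  simp

lemma eq_epsSum (n : ℕ) (a : Fin n → ℤ)
    (hmono : ∀ i j : Fin n, i ≤ j → a j ≤ a i)
    (h01 : ∀ i, a i = 0 ∨ a i = 1) :
    ∃ k ≤ n, a = epsSumZ n k := by
  classical
  refine ⟨(Finset.univ.filter (fun i => a i = 1)).card,
    le_trans (Finset.card_filter_le _ _) (by simp), ?_⟩
  funext j
  rcases h01 j with h0 | h1
  · have hsub : Finset.univ.filter (fun i => a i = 1) ⊆ Finset.Iio j := by
      intro i hi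
      rw [Finset.mem_filter] at hi
      rw [Finset.mem_Iio]
      by_contra hlt
      have := hmono j i (le_of_not_gt hlt)
      omega
    have hle := Finset.card_le_card hsub
    rw [Fin.card_Iio] at hle
    simp only [epsSumZ]
    rw [if_neg (by omega)]
    exact h0
  · have hsub : Finset.Iic j ⊆ Finset.univ.filter (fun i => a i = 1) := by
      intro i hi
      rw [Finset.mem_Iic] at hi
      rw [Finset.mem_filter]
      have h1' := hmono i j hi
      rcases h01 i with h | h
      · omega
      · exact ⟨Finset.mem_univ i, h⟩
    have hle := Finset.card_le_card hsub
    rw [Fin.card_Iic] at hle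
    simp only [epsSumZ]
    rw [if_pos (by omega)]
    exact h1

/-- for `n ≥ 3` and a tuple `a = (a₁,…,aₙ)` of integers with
`a₁ ≥ ⋯ ≥ aₙ ≥ 0` and `a₁+⋯+aₙ` even, one has `C′_n(a) < 8n+4` iff `a` is one
of: `0`, `2ε₁`, `ε₁+ε₂`, `2ε₁+ε₂+ε₃`, `ε₁+ε₂+ε₃+ε₄` (provided `n ≥ 4`),
`ε₁+⋯+ε₆` (provided `n = 6`). -/
theorem stmt4 (n : ℕ) (hn : 3 ≤ n) (a : Fin n → ℤ)
    (hmono : ∀ i j : Fin n, i ≤ j → a j ≤ a i)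
    (hnonneg : ∀ i, 0 ≤ a i)
    (heven : Even (∑ i, a i)) :
    casimirSp n a < 8 * (n : ℤ) + 4 ↔
      a = 0 ∨ a = twoEps1Z n ∨ a = epsSumZ n 2 ∨ a = twoEps1Eps2Eps3Z n ∨
      (4 ≤ n ∧ a = epsSumZ n 4) ∨ (n = 6 ∧ a = epsSumZ n 6) := by
  have hn' : (3 : ℤ) ≤ (n : ℤ) := by exact_mod_cast hn
  have tail : ∀ i j : Fin n, i.1 ≤ j.1 → a j ≤ a i := fun i j h => hmono i j (by rwa [Fin.le_def])
  constructor
  · intro hC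
    obtain ⟨i0, hi0v⟩ : ∃ i : Fin n, i.1 = 0 := ⟨⟨0, by omega⟩, rfl⟩
    obtain ⟨i1, hi1v⟩ : ∃ i : Fin n, i.1 = 1 := ⟨⟨1, by omega⟩, rfl⟩
    obtain ⟨i2, hi2v⟩ : ∃ i : Fin n, i.1 = 2 := ⟨⟨2, by omega⟩, rfl⟩
    have key : ∀ s : Finset (Fin n),
        (∑ i ∈ s, a i * (a i + 2 * (n : ℤ) + 2 - 2 * ((i.1 : ℤ) + 1))) ≤ casimirSp n a := by
      intro s
      apply Finset.sum_le_sum_of_subset_of_nonneg (Finset.subset_univ s)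
      intro i _ _
      have h1 := hnonneg i
      have h2 : (i.1 : ℤ) < (n : ℤ) := by exact_mod_cast i.isLt
      exact mul_nonneg h1 (by linarith)
    rcases (show a i0 ≤ 1 ∨ a i0 = 2 ∨ a i0 = 3 ∨ 4 ≤ a i0 from by have := hnonneg i0; omega)
      with hA | hA | hA | hA
    · -- all entries are 0 or 1
      have h01 : ∀ i, a i = 0 ∨ a i = 1 := fun i => by
        have := tail i0 i (by omega); have := hnonneg i; omega
      obtain ⟨k, hk, rfl⟩ := eq_epsSum n a hmono h01
      rw [casimir_epsSum n k hk] at hC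
      rw [sum_epsSum n k hk] at heven
      have hkev : Even k := by exact_mod_cast heven
      have hkn : (k : ℤ) ≤ (n : ℤ) := by exact_mod_cast hk
      obtain ⟨m, rfl⟩ := hkev
      rcases (show m = 0 ∨ m = 1 ∨ m = 2 ∨ m = 3 ∨ 4 ≤ m from by omega) with hm | hm | hm | hm | hm
      · subst hm; left; funext j; simp [epsSumZ]
      · subst hm; right; right; left; norm_num
      · subst hm
        right; right; right; right; left
        exact ⟨by omega, by norm_num⟩
      · subst hm
        push_cast at hC hkn
        have h6 : n = 6 := by
          have h7 : (n : ℤ) < 7 := by nlinarith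
          have : n < 7 := by exact_mod_cast h7
          omega
        right; right; right; right; right
        exact ⟨h6, by norm_num⟩
      · exfalso
        have hK8 : (8 : ℤ) ≤ ((m + m : ℕ) : ℤ) := by push_cast; omega
        have p1 : (0 : ℤ) ≤ (((m + m : ℕ) : ℤ) - 8) * ((n : ℤ) - ((m + m : ℕ) : ℤ)) :=
          mul_nonneg (by linarith) (by linarith)
        have p2 : (0 : ℤ) ≤ ((m + m : ℕ) : ℤ) * ((n : ℤ) - 7) :=
          mul_nonneg (by linarith) (by linarith)
        nlinarith [hC, p1, p2, hK8]
    · -- a i0 = 2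
      have hB2 : a i1 ≤ 2 := by have := tail i0 i1 (by omega); omega
      rcases (show a i1 = 0 ∨ a i1 = 1 ∨ a i1 = 2 from by have := hnonneg i1; omega)
        with hB | hB | hB
      · -- a = 2ε₁
        right; left
        funext j
        simp only [twoEps1Z]
        rcases (show j.1 = 0 ∨ 1 ≤ j.1 from by omega) with h | h
        · rw [if_pos h]
          have := tail i0 j (by omega); have := tail j i0 (by omega); omega
        · rw [if_neg (by omega)]
          have := tail i1 j (by omega); have := hnonneg j; omega
      · -- a i1 = 1
        have hC2 : a i2 ≤ 1 := by have := tail i1 i2 (by omega); omega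
        rcases (show a i2 = 0 ∨ a i2 = 1 from by have := hnonneg i2; omega) with hc | hc
        · -- parity contradiction : sum = 3
          exfalso
          have hsum : (∑ i, a i) = 3 := by
            rw [sum_eq n (fun j => if j = 0 then 2 else if j = 1 then 1 else 0) a ?_]
            · rw [sum_prefix n 2 (by omega) _
                (fun i hi => by rw [if_neg (by omega), if_neg (by omega)])]
              simp [Finset.sum_range_succ]
            · intro i
              beta_reduce
              rcases (show i.1 = 0 ∨ i.1 = 1 ∨ 2 ≤ i.1 from by omega) with h | h | h
              · rw [if_pos h]
                have := tail i0 i (by omega); have := tail i i0 (by omega); omega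
              · rw [if_neg (by omega), if_pos h]
                have := tail i1 i (by omega); have := tail i i1 (by omega); omega
              · rw [if_neg (by omega), if_neg (by omega)]
                have := tail i2 i (by omega); have := hnonneg i; omega
          rw [hsum] at heven
          obtain ⟨r, hr⟩ := heven
          omega
        · -- a i2 = 1
          by_cases hn4 : 4 ≤ n
          · obtain ⟨i3, hi3v⟩ : ∃ i : Fin n, i.1 = 3 := ⟨⟨3, by omega⟩, rfl⟩
            have hD1 : a i3 ≤ 1 := by have := tail i2 i3 (by omega); omega
            rcases (show a i3 = 0 ∨ a i3 = 1 from by have := hnonneg i3; omega) with hd | hd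
            · -- a = 2ε₁+ε₂+ε₃
              right; right; right; left
              funext j
              simp only [twoEps1Eps2Eps3Z]
              rcases (show j.1 = 0 ∨ j.1 = 1 ∨ j.1 = 2 ∨ 3 ≤ j.1 from by omega) with h | h | h | h
              · rw [if_pos h]
                have := tail i0 j (by omega); have := tail j i0 (by omega); omega
              · rw [if_neg (by omega), if_pos (by omega)]
                have := tail i1 j (by omega); have := tail j i1 (by omega); omega
              · rw [if_neg (by omega), if_pos (by omega)]
                have := tail i2 j (by omega); have := tail j i2 (by omega); omega
              · rw [if_neg (by omega), if_neg (by omega)]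
                have := tail i3 j (by omega); have := hnonneg j; omega
            · -- a i3 = 1
              exfalso
              by_cases hn5 : 5 ≤ n
              · have hp := key {i0, i1, i2, i3}
                have m0 : i0 ∉ ({i1, i2, i3} : Finset (Fin n)) := by
                  simp only [Finset.mem_insert, Finset.mem_singleton]
                  push_neg
                  exact ⟨fin_ne (by omega), fin_ne (by omega), fin_ne (by omega)⟩
                have m1 : i1 ∉ ({i2, i3} : Finset (Fin n)) := by
                  simp only [Finset.mem_insert, Finset.mem_singleton]
                  push_neg
                  exact ⟨fin_ne (by omega), fin_ne (by omega)⟩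
                rw [Finset.sum_insert m0, Finset.sum_insert m1,
                  Finset.sum_pair (fin_ne (by omega))] at hp
                rw [hi0v, hi1v, hi2v, hi3v] at hp
                rw [hA, hB, hc, hd] at hp
                have hn5' : (5 : ℤ) ≤ (n : ℤ) := by exact_mod_cast hn5
                push_cast at hp
                linarith
              · -- n = 4, parity contradiction : sum = 5
                have hsum : (∑ i, a i) = 5 := by
                  rw [sum_eq n (fun j => if j = 0 then 2 else 1) a ?_]
                  · have hn4' : n = 4 := by omega
                    subst hn4'
                    simp [Finset.sum_range_succ]
                  · intro i
                    beta_reduce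
                    rcases (show i.1 = 0 ∨ 1 ≤ i.1 from by omega) with h | h
                    · rw [if_pos h]
                      have := tail i0 i (by omega); have := tail i i0 (by omega); omega
                    · rw [if_neg (by omega)]
                      have h4 : i.1 ≤ 3 := by have := i.isLt; omega
                      have := tail i1 i (by omega); have := tail i i3 (by omega); omega
                rw [hsum] at heven
                obtain ⟨r, hr⟩ := heven
                omega
          · -- n = 3, a = 2ε₁+ε₂+ε₃
            right; right; right; left
            funext j
            simp only [twoEps1Eps2Eps3Z]
            rcases (show j.1 = 0 ∨ j.1 = 1 ∨ j.1 = 2 from by have := j.isLt; omega)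
              with h | h | h
            · rw [if_pos h]
              have := tail i0 j (by omega); have := tail j i0 (by omega); omega
            · rw [if_neg (by omega), if_pos (by omega)]
              have := tail i1 j (by omega); have := tail j i1 (by omega); omega
            · rw [if_neg (by omega), if_pos (by omega)]
              have := tail i2 j (by omega); have := tail j i2 (by omega); omega
      · -- a i1 = 2 : contradiction
        exfalso
        have hp := key {i0, i1}
        rw [Finset.sum_pair (fin_ne (by omega))] at hp
        rw [hi0v, hi1v, hA, hB] at hp
        push_cast at hp
        linarith
    · -- a i0 = 3 : contradiction
      exfalso
      have hB1 : 1 ≤ a i1 := by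
        by_contra hB
        have hB0 : a i1 = 0 := by have := hnonneg i1; omega
        have hsum : (∑ i, a i) = 3 := by
          rw [sum_eq n (fun j => if j = 0 then 3 else 0) a ?_]
          · rw [sum_prefix n 1 (by omega) _ (fun i hi => by rw [if_neg (by omega)])]
            simp
          · intro i
            beta_reduce
            rcases (show i.1 = 0 ∨ 1 ≤ i.1 from by omega) with h | h
            · rw [if_pos h]
              have := tail i0 i (by omega); have := tail i i0 (by omega); omega
            · rw [if_neg (by omega)]
              have := tail i1 i (by omega); have := hnonneg i; omega
        rw [hsum] at heven
        obtain ⟨r, hr⟩ := heven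
        omega
      have hp := key {i0, i1}
      rw [Finset.sum_pair (fin_ne (by omega))] at hp
      rw [hi0v, hi1v, hA] at hp
      push_cast at hp
      nlinarith [hp, hC, hB1, hn',
        mul_nonneg (by linarith : (0:ℤ) ≤ a i1 - 1) (by linarith : (0:ℤ) ≤ a i1 + 2 * (n:ℤ) - 2)]
    · -- a i0 ≥ 4 : contradiction
      exfalso
      have hp := key {i0}
      rw [Finset.sum_singleton] at hp
      rw [hi0v] at hp
      push_cast at hp
      nlinarith [hp, hC, hA, hn',
        mul_nonneg (by linarith : (0:ℤ) ≤ a i0 - 4) (by linarith : (0:ℤ) ≤ a i0 + 2 * (n:ℤ))]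
  · rintro (rfl | rfl | rfl | rfl | ⟨hn4, rfl⟩ | ⟨rfl, rfl⟩)
    · simp [casimirSp]
      linarith
    · rw [casimir_eq n (fun j => if j = 0 then 2 else 0) (twoEps1Z n)
        (fun i => rfl)]
      rw [sum_prefix n 1 (by omega) _ (fun i hi => by rw [if_neg (by omega)]; ring)]
      simp
      linarith
    · rw [casimir_epsSum n 2 (by omega)]
      push_cast
      linarith
    · rw [casimir_eq n (fun j => if j = 0 then 2 else if j < 3 then 1 else 0)
        (twoEps1Eps2Eps3Z n) (fun i => rfl)]
      rw [sum_prefix n 3 hn _ (fun i hi => by rw [if_neg (by omega), if_neg (by omega)]; ring)]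
      simp [Finset.sum_range_succ]
      linarith
    · rw [casimir_epsSum n 4 hn4]
      push_cast
      have : (4 : ℤ) ≤ (n : ℤ) := by exact_mod_cast hn4
      linarith
    · rw [casimir_epsSum 6 6 le_rfl]
      norm_num
end

section
/- Let n ≥ 9 be an integer, set d = n if n is odd and d = n/2 if n is even, and let N = n(n−1)/2 or N = n(n+1)/2. Let b = (b₁,…,b_{N−1}) be a tuple of non-negative integers with d ∣ t(b). Then: (i) if Q_N(b) < 4N(N+1), then b is one of: the zero tuple, e₁+e_{N−1}, e₂+e_{N−2}, 2e₁+e_{N−2}, e₂+2e_{N−1}; (ii) Q_N(b) = 4N(N+1) if and only if b = 2e₁+2e_{N−1}. (Here 4N(N+1) = Q_N(2e₁+2e_{N−1}), corresponding to the Casimir eigenvalue 2(N+1)/N of the representation with highest weight 2ω₁+2ω_{N−1}.) -/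
open Finset

/-- `c_i = Σ_{j=i}^{N−1} b_j` for a tuple `b = (b₁,…,b_{N−1})` of fundamental
weight coefficients for `su(N)` (indexed by `Fin (N−1)`). -/
def cSU (N : ℕ) (b : Fin (N - 1) → ℕ) (i : Fin (N - 1)) : ℤ :=
  ∑ j ∈ Finset.univ.filter (fun j => i ≤ j), (b j : ℤ)

/-- `Q_N(b) = N·Σ cᵢ² − (Σ cᵢ)² + N·Σ (N+1−2i)·cᵢ`; the Casimir eigenvalue of
the irreducible `su(N)`-representation with highest weight `Σ bⱼωⱼ` equals
`Q_N(b)/(2N²)`. -/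
def QSU (N : ℕ) (b : Fin (N - 1) → ℕ) : ℤ :=
  (N : ℤ) * ∑ i : Fin (N - 1), (cSU N b i) ^ 2
    - (∑ i : Fin (N - 1), cSU N b i) ^ 2
    + (N : ℤ) * ∑ i : Fin (N - 1), ((N : ℤ) + 1 - 2 * ((i.1 : ℤ) + 1)) * cSU N b i

/-- `t(b) = Σ_{j=1}^{N−1} j·b_j`. -/
def tSU (N : ℕ) (b : Fin (N - 1) → ℕ) : ℕ :=
  ∑ i : Fin (N - 1), (i.1 + 1) * b i

/-- `e_j`: the tuple with `1` in position `j` (1-indexed) and `0` elsewhere. -/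
def eSU (N j : ℕ) : Fin (N - 1) → ℕ := fun i => if i.1 + 1 = j then 1 else 0

lemma sum_range_lin (K : ℤ) (m : ℕ) :
    (∑ k ∈ Finset.range m, (K - 2*((k:ℤ)+1))) = m * (K - m - 1) := by
  induction m with
  | zero => simp
  | succ m ih => rw [Finset.sum_range_succ, ih]; push_cast; ring

lemma sum_fin_if (M : ℕ) (m : ℕ) (hm : m < M) (f : ℕ → ℤ) :
    (∑ i : Fin M, if i.1 ≤ m then f i.1 else 0) = ∑ k ∈ Finset.range (m+1), f k := by
  rw [Fin.sum_univ_eq_sum_range (fun k => if k ≤ m then f k else 0) M]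
  rw [← Finset.sum_filter]
  congr 1
  ext k; simp [Nat.lt_succ_iff]; omega

lemma sum_fin_if_const (M m : ℕ) (hm : m < M) (x : ℤ) :
    (∑ i : Fin M, if i.1 ≤ m then x else 0) = ((m:ℤ)+1) * x := by
  rw [sum_fin_if M m hm (fun _ => x), Finset.sum_const, Finset.card_range]
  ring

variable {N : ℕ} (b : Fin (N - 1) → ℕ)

lemma cSU_eq (i : Fin (N-1)) :
    cSU N b i = ∑ j : Fin (N-1), if i.1 ≤ j.1 then (b j : ℤ) else 0 := by
  rw [cSU, Finset.sum_filter]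
  simp only [Fin.le_def]

lemma sum_c : (∑ i : Fin (N-1), cSU N b i) = ∑ j : Fin (N-1), ((j.1:ℤ)+1) * (b j : ℤ) := by
  simp only [cSU_eq]
  rw [Finset.sum_comm]
  exact Finset.sum_congr rfl fun j _ => sum_fin_if_const _ _ j.isLt _

lemma sum_lin_c : (∑ i : Fin (N-1), ((N:ℤ)+1-2*((i.1:ℤ)+1)) * cSU N b i)
    = ∑ j : Fin (N-1), ((j.1:ℤ)+1) * ((N:ℤ)-1-(j.1:ℤ)) * (b j:ℤ) := by
  simp only [cSU_eq, Finset.mul_sum]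
  rw [Finset.sum_comm]
  refine Finset.sum_congr rfl fun j _ => ?_
  have h : ∀ i : Fin (N-1), ((N:ℤ)+1-2*((i.1:ℤ)+1)) * (if i.1 ≤ j.1 then (b j:ℤ) else 0)
      = (if i.1 ≤ j.1 then ((N:ℤ)+1-2*((i.1:ℤ)+1)) * (b j:ℤ) else 0) := by
    intro i; split <;> simp
  simp only [h]
  rw [sum_fin_if (N-1) j.1 j.isLt (fun k => ((N:ℤ)+1-2*((k:ℤ)+1)) * (b j:ℤ)),
    ← Finset.sum_mul, sum_range_lin ((N:ℤ)+1)]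
  push_cast
  ring

lemma sum_c_sq : (∑ i : Fin (N-1), (cSU N b i)^2)
    = ∑ j : Fin (N-1), ∑ l : Fin (N-1), (((min j.1 l.1 : ℕ):ℤ)+1) * ((b j:ℤ) * (b l:ℤ)) := by
  simp only [cSU_eq, pow_two, Finset.sum_mul_sum]
  rw [Finset.sum_comm]
  refine Finset.sum_congr rfl fun j _ => ?_
  rw [Finset.sum_comm]
  refine Finset.sum_congr rfl fun l _ => ?_
  have h : ∀ i : Fin (N-1), (if i.1 ≤ j.1 then (b j:ℤ) else 0) * (if i.1 ≤ l.1 then (b l:ℤ) else 0)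
      = if i.1 ≤ min j.1 l.1 then (b j:ℤ)*(b l:ℤ) else 0 := by
    intro i; rcases le_total i.1 j.1 with h1|h1 <;> rcases le_total i.1 l.1 with h2|h2 <;>
      split_ifs <;> simp_all <;> omega
  simp only [h]
  exact sum_fin_if_const _ _ (lt_of_le_of_lt (min_le_left _ _) j.isLt) _
def Pq (N : ℕ) (b : Fin (N-1) → ℕ) : ℕ :=
  ∑ j : Fin (N-1), ∑ l : Fin (N-1), (min j.1 l.1 + 1) * (N - 1 - max j.1 l.1) * (b j * b l)

def Sl (N : ℕ) (b : Fin (N-1) → ℕ) : ℕ :=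
  ∑ j : Fin (N-1), (j.1 + 1) * (N - 1 - j.1) * b j



lemma hSl_cast : ((Sl N b : ℕ) : ℤ) = ∑ j : Fin (N-1), ((j.1:ℤ)+1) * ((N:ℤ)-1-(j.1:ℤ)) * (b j:ℤ) := by
  rw [Sl]
  push_cast
  refine Finset.sum_congr rfl fun j _ => ?_
  have h2 : (((N : ℕ) - 1 - j.1 : ℕ) : ℤ) = (N:ℤ) - 1 - (j.1:ℤ) := by
    have := j.isLt; omega
  rw [h2]

lemma hPq_cast : ((Pq N b : ℕ) : ℤ)
    = ∑ j : Fin (N-1), ∑ l : Fin (N-1),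
        (((min j.1 l.1 : ℕ):ℤ)+1) * ((N:ℤ) - 1 - ((max j.1 l.1 : ℕ):ℤ)) * ((b j:ℤ) * (b l:ℤ)) := by
  rw [Pq, Nat.cast_sum]
  refine Finset.sum_congr rfl fun j _ => ?_
  rw [Nat.cast_sum]
  refine Finset.sum_congr rfl fun l _ => ?_
  have h2 : (((N : ℕ) - 1 - max j.1 l.1 : ℕ) : ℤ) = (N:ℤ) - 1 - ((max j.1 l.1 : ℕ):ℤ) := by
    have := j.isLt; have := l.isLt
    rcases le_total j.1 l.1 with h|h
    · rw [max_eq_right h]; omega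
    · rw [max_eq_left h]; omega
  rw [Nat.cast_mul, Nat.cast_mul, Nat.cast_add, Nat.cast_one, Nat.cast_mul, h2]

lemma L1 : QSU N b = (Pq N b : ℤ) + (N:ℤ) * (Sl N b : ℤ) := by
  rw [QSU, sum_c, sum_lin_c, sum_c_sq, hPq_cast, hSl_cast]
  rw [pow_two, Finset.sum_mul_sum]
  rw [Finset.mul_sum, Finset.mul_sum, ← Finset.sum_sub_distrib]
  congr 1
  refine Finset.sum_congr rfl fun j _ => ?_
  rw [Finset.mul_sum, ← Finset.sum_sub_distrib]
  refine Finset.sum_congr rfl fun l _ => ?_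
  have hl := l.isLt; have hj := j.isLt
  rcases le_total j.1 l.1 with h|h
  · rw [min_eq_left h, max_eq_right h]; ring
  · rw [min_eq_right h, max_eq_left h]; ring
lemma key_bound (hQ : QSU N b ≤ 4*(N:ℤ)*((N:ℤ)+1)) : Sl N b ≤ 4*N := by
  have h1 : (Pq N b : ℤ) + (N:ℤ) * (Sl N b : ℤ) ≤ 4*(N:ℤ)*((N:ℤ)+1) := by
    rw [← L1]; exact hQ
  have hnat : Pq N b + N * Sl N b ≤ 4*N*(N+1) := by exact_mod_cast h1
  have hdiag : Sl N b ≤ Pq N b := by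
    rw [Pq, Sl]
    calc ∑ j : Fin (N-1), (j.1+1)*(N-1-j.1)*b j
        ≤ ∑ j : Fin (N-1), (min j.1 j.1+1)*(N-1-max j.1 j.1)*(b j*b j) := by
          refine Finset.sum_le_sum fun j _ => ?_
          rw [min_self, max_self]
          refine Nat.mul_le_mul_left _ ?_
          rcases Nat.eq_zero_or_pos (b j) with h|h
          · simp [h]
          · exact Nat.le_mul_of_pos_right _ h
      _ ≤ ∑ j : Fin (N-1), ∑ l : Fin (N-1), (min j.1 l.1+1)*(N-1-max j.1 l.1)*(b j*b l) :=
          Finset.sum_le_sum fun j _ =>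
            Finset.single_le_sum (f := fun l => (min j.1 l.1+1)*(N-1-max j.1 l.1)*(b j*b l))
              (fun l _ => Nat.zero_le _) (Finset.mem_univ j)
  have h2 : Sl N b * (N+1) ≤ (4*N) * (N+1) := by
    calc Sl N b * (N+1) = Sl N b + N * Sl N b := by ring
      _ ≤ Pq N b + N * Sl N b := by omega
      _ ≤ 4*N*(N+1) := hnat
      _ = (4*N)*(N+1) := by ring
  exact Nat.le_of_mul_le_mul_right h2 (Nat.succ_pos N)

lemma middle_zero (hN36 : 36 ≤ N) (hS : Sl N b ≤ 4*N) :
    ∀ j : Fin (N-1), 4 ≤ j.1 → j.1 + 6 ≤ N → b j = 0 := by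
  intro j h4 h6
  by_contra hne
  have hb : 1 ≤ b j := Nat.one_le_iff_ne_zero.2 hne
  have hle : (j.1+1)*(N-1-j.1)*b j ≤ Sl N b := by
    rw [Sl]
    exact Finset.single_le_sum (f := fun j => (j.1+1)*(N-1-j.1)*b j)
      (fun l _ => Nat.zero_le _) (Finset.mem_univ j)
  have hle2 : (j.1+1)*(N-1-j.1) ≤ 4*N := by
    calc (j.1+1)*(N-1-j.1) = (j.1+1)*(N-1-j.1)*1 := by ring
      _ ≤ (j.1+1)*(N-1-j.1)*b j := Nat.mul_le_mul_left _ hb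
      _ ≤ 4*N := le_trans hle hS
  have hx : (5:ℤ) ≤ (j.1:ℤ)+1 := by omega
  have hy : (5:ℤ) ≤ (N:ℤ)-1-(j.1:ℤ) := by omega
  have hc : ((j.1:ℤ)+1)*((N:ℤ)-1-(j.1:ℤ)) ≤ 4*(N:ℤ) := by
    have : (((j.1+1)*(N-1-j.1) : ℕ) : ℤ) ≤ ((4*N : ℕ) : ℤ) := by exact_mod_cast hle2
    have h2 : (((N:ℕ)-1-j.1 : ℕ):ℤ) = (N:ℤ)-1-(j.1:ℤ) := by have := j.isLt; omega
    rw [Nat.cast_mul, h2] at this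
    push_cast at this ⊢
    linarith
  have hN36' : (36:ℤ) ≤ (N:ℤ) := by exact_mod_cast hN36
  nlinarith [mul_nonneg (by linarith : (0:ℤ) ≤ (j.1:ℤ)+1-5) (by linarith : (0:ℤ) ≤ (N:ℤ)-1-(j.1:ℤ)-5),
    (j.1:ℤ)+1+((N:ℤ)-1-(j.1:ℤ))]





lemma enum8 (a b c d e f g h : ℕ)
    (hpq : a + 2*b + 3*c + 4*d + (e + 2*f + 3*g + 4*h) ≤ 4)
    (hzero : ((a:ℤ) + 2*(b:ℤ) + 3*(c:ℤ) + 4*(d:ℤ)) - ((e:ℤ) + 2*(f:ℤ) + 3*(g:ℤ) + 4*(h:ℤ)) = 0) :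
    (a = 0 ∧ b = 0 ∧ c = 0 ∧ d = 0 ∧ e = 0 ∧ f = 0 ∧ g = 0 ∧ h = 0)
      ∨ (a = 1 ∧ b = 0 ∧ c = 0 ∧ d = 0 ∧ e = 1 ∧ f = 0 ∧ g = 0 ∧ h = 0)
      ∨ (a = 2 ∧ b = 0 ∧ c = 0 ∧ d = 0 ∧ e = 2 ∧ f = 0 ∧ g = 0 ∧ h = 0)
      ∨ (a = 2 ∧ b = 0 ∧ c = 0 ∧ d = 0 ∧ e = 0 ∧ f = 1 ∧ g = 0 ∧ h = 0)
      ∨ (a = 0 ∧ b = 1 ∧ c = 0 ∧ d = 0 ∧ e = 2 ∧ f = 0 ∧ g = 0 ∧ h = 0)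
      ∨ (a = 0 ∧ b = 1 ∧ c = 0 ∧ d = 0 ∧ e = 0 ∧ f = 1 ∧ g = 0 ∧ h = 0) := by
  have hq : e + 2*f + 3*g + 4*h ≤ 2 := by omega
  have hp : a + 2*b + 3*c + 4*d ≤ 2 := by omega
  have hc : c = 0 := by omega
  have hd : d = 0 := by omega
  have hg : g = 0 := by omega
  have hh : h = 0 := by omega
  subst hc hd hg hh
  have h1 : b ≤ 1 := by omega
  have h2 : f ≤ 1 := by omega
  interval_cases b <;> interval_cases f <;> omega

set_option maxHeartbeats 4000000 in
lemma classify (hN36 : 36 ≤ N) (d : ℕ) (hd5 : 5 ≤ d) (hdN : d ∣ N)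
    (hdvd : d ∣ tSU N b) (hQ : QSU N b ≤ 4*(N:ℤ)*((N:ℤ)+1)) :
    b = 0 ∨ b = eSU N 1 + eSU N (N-1) ∨ b = eSU N 2 + eSU N (N-2) ∨
    b = 2 • eSU N 1 + eSU N (N-2) ∨ b = eSU N 2 + 2 • eSU N (N-1) ∨
    b = 2 • eSU N 1 + 2 • eSU N (N-1) := by
  have hS := key_bound b hQ
  have hmid := middle_zero b hN36 hS
  obtain ⟨i0, hi0⟩ : ∃ i : Fin (N-1), i.1 = 0 := ⟨⟨0, by omega⟩, rfl⟩
  obtain ⟨i1, hi1⟩ : ∃ i : Fin (N-1), i.1 = 1 := ⟨⟨1, by omega⟩, rfl⟩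
  obtain ⟨i2, hi2⟩ : ∃ i : Fin (N-1), i.1 = 2 := ⟨⟨2, by omega⟩, rfl⟩
  obtain ⟨i3, hi3⟩ : ∃ i : Fin (N-1), i.1 = 3 := ⟨⟨3, by omega⟩, rfl⟩
  obtain ⟨i4, hi4⟩ : ∃ i : Fin (N-1), i.1 = N-5 := ⟨⟨N-5, by omega⟩, rfl⟩
  obtain ⟨i5, hi5⟩ : ∃ i : Fin (N-1), i.1 = N-4 := ⟨⟨N-4, by omega⟩, rfl⟩
  obtain ⟨i6, hi6⟩ : ∃ i : Fin (N-1), i.1 = N-3 := ⟨⟨N-3, by omega⟩, rfl⟩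
  obtain ⟨i7, hi7⟩ : ∃ i : Fin (N-1), i.1 = N-2 := ⟨⟨N-2, by omega⟩, rfl⟩
  have hsum : ∀ f : Fin (N-1) → ℕ,
      (∑ j ∈ ({i0,i1,i2,i3,i4,i5,i6,i7} : Finset (Fin (N-1))), f j)
        = f i0 + f i1 + f i2 + f i3 + f i4 + f i5 + f i6 + f i7 := by
    intro f
    rw [Finset.sum_insert (by
        simp only [Finset.mem_insert, Finset.mem_singleton, Fin.ext_iff, hi0, hi1, hi2, hi3, hi4, hi5, hi6, hi7]; omega),
      Finset.sum_insert (by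
        simp only [Finset.mem_insert, Finset.mem_singleton, Fin.ext_iff, hi1, hi2, hi3, hi4, hi5, hi6, hi7]; omega),
      Finset.sum_insert (by
        simp only [Finset.mem_insert, Finset.mem_singleton, Fin.ext_iff, hi2, hi3, hi4, hi5, hi6, hi7]; omega),
      Finset.sum_insert (by
        simp only [Finset.mem_insert, Finset.mem_singleton, Fin.ext_iff, hi3, hi4, hi5, hi6, hi7]; omega),
      Finset.sum_insert (by
        simp only [Finset.mem_insert, Finset.mem_singleton, Fin.ext_iff, hi4, hi5, hi6, hi7]; omega),
      Finset.sum_insert (by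
        simp only [Finset.mem_insert, Finset.mem_singleton, Fin.ext_iff, hi5, hi6, hi7]; omega),
      Finset.sum_insert (by
        simp only [Finset.mem_singleton, Fin.ext_iff, hi6, hi7]; omega),
      Finset.sum_singleton]
    omega
  have hout : ∀ j : Fin (N-1), j ∉ ({i0,i1,i2,i3,i4,i5,i6,i7} : Finset (Fin (N-1))) → b j = 0 := by
    intro j hj
    simp only [Finset.mem_insert, Finset.mem_singleton, not_or] at hj
    obtain ⟨n0,n1,n2,n3,n4,n5,n6,n7⟩ := hj
    have hjlt := j.isLt
    have e0 : j.1 ≠ 0 := fun h => n0 (Fin.ext (by omega))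
    have e1 : j.1 ≠ 1 := fun h => n1 (Fin.ext (by omega))
    have e2 : j.1 ≠ 2 := fun h => n2 (Fin.ext (by omega))
    have e3 : j.1 ≠ 3 := fun h => n3 (Fin.ext (by omega))
    have e4 : j.1 ≠ N-5 := fun h => n4 (Fin.ext (by omega))
    have e5 : j.1 ≠ N-4 := fun h => n5 (Fin.ext (by omega))
    have e6 : j.1 ≠ N-3 := fun h => n6 (Fin.ext (by omega))
    have e7 : j.1 ≠ N-2 := fun h => n7 (Fin.ext (by omega))
    exact hmid j (by omega) (by omega)
  have ht8 : tSU N b = 1*(b i0) + 2*(b i1) + 3*(b i2) + 4*(b i3)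
      + (N-4)*(b i4) + (N-3)*(b i5) + (N-2)*(b i6) + (N-1)*(b i7) := by
    rw [tSU, ← Finset.sum_subset
      (Finset.subset_univ ({i0,i1,i2,i3,i4,i5,i6,i7} : Finset (Fin (N-1))))
      (fun j _ hj => by rw [hout j hj, Nat.mul_zero]),
      hsum (fun j => (j.1+1) * b j)]
    rw [hi0, hi1, hi2, hi3, hi4, hi5, hi6, hi7]
    rw [show N-5+1 = N-4 from by omega, show N-4+1 = N-3 from by omega,
      show N-3+1 = N-2 from by omega, show N-2+1 = N-1 from by omega]
  have hS8 : 1*(N-1)*(b i0) + 2*(N-2)*(b i1) + 3*(N-3)*(b i2) + 4*(N-4)*(b i3)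
      + (N-4)*4*(b i4) + (N-3)*3*(b i5) + (N-2)*2*(b i6) + (N-1)*1*(b i7) ≤ Sl N b := by
    rw [Sl]
    have hsub := Finset.sum_le_sum_of_subset
      (f := fun j : Fin (N-1) => (j.1+1)*(N-1-j.1)*b j)
      (Finset.subset_univ ({i0,i1,i2,i3,i4,i5,i6,i7} : Finset (Fin (N-1))))
    rw [hsum (fun j => (j.1+1)*(N-1-j.1)*b j)] at hsub
    refine le_trans (le_of_eq ?_) hsub
    rw [hi0, hi1, hi2, hi3, hi4, hi5, hi6, hi7]
    rw [show N-5+1 = N-4 from by omega, show N-4+1 = N-3 from by omega,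
      show N-3+1 = N-2 from by omega, show N-2+1 = N-1 from by omega,
      show N-1-0 = N-1 from by omega, show N-1-1 = N-2 from by omega,
      show N-1-2 = N-3 from by omega, show N-1-3 = N-4 from by omega,
      show N-1-(N-5) = 4 from by omega, show N-1-(N-4) = 3 from by omega,
      show N-1-(N-3) = 2 from by omega, show N-1-(N-2) = 1 from by omega]
  -- joint bound on boundary weights
  have h36 : (36:ℤ) ≤ (N:ℤ) := by exact_mod_cast hN36
  have hpq : b i0 + 2*(b i1) + 3*(b i2) + 4*(b i3)
      + (b i7 + 2*(b i6) + 3*(b i5) + 4*(b i4)) ≤ 4 := by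
    by_contra hc
    push_neg at hc
    have hS8' := le_trans hS8 hS
    have hc' : (5:ℤ) ≤ (b i0:ℤ) + 2*(b i1:ℤ) + 3*(b i2:ℤ) + 4*(b i3:ℤ)
        + ((b i7:ℤ) + 2*(b i6:ℤ) + 3*(b i5:ℤ) + 4*(b i4:ℤ)) := by
      push_cast; omega
    have hS8i : 1*((N:ℤ)-1)*(b i0:ℤ) + 2*((N:ℤ)-2)*(b i1:ℤ) + 3*((N:ℤ)-3)*(b i2:ℤ)
        + 4*((N:ℤ)-4)*(b i3:ℤ) + ((N:ℤ)-4)*4*(b i4:ℤ) + ((N:ℤ)-3)*3*(b i5:ℤ)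
        + ((N:ℤ)-2)*2*(b i6:ℤ) + ((N:ℤ)-1)*1*(b i7:ℤ) ≤ 4*(N:ℤ) := by
      have h := hS8'
      zify [show 1 ≤ N from by omega, show 2 ≤ N from by omega,
        show 3 ≤ N from by omega, show 4 ≤ N from by omega] at h
      linarith
    have hprod : (0:ℤ) ≤ ((N:ℤ)-4) * ((b i0:ℤ) + 2*(b i1:ℤ) + 3*(b i2:ℤ) + 4*(b i3:ℤ)
        + ((b i7:ℤ) + 2*(b i6:ℤ) + 3*(b i5:ℤ) + 4*(b i4:ℤ)) - 5) := by
      exact mul_nonneg (by linarith) (by linarith)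
    have hA0 : (0:ℤ) ≤ (b i0:ℤ) := Int.natCast_nonneg _
    have hA1 : (0:ℤ) ≤ (b i1:ℤ) := Int.natCast_nonneg _
    have hA2 : (0:ℤ) ≤ (b i2:ℤ) := Int.natCast_nonneg _
    have hA3 : (0:ℤ) ≤ (b i3:ℤ) := Int.natCast_nonneg _
    have hA4 : (0:ℤ) ≤ (b i4:ℤ) := Int.natCast_nonneg _
    have hA5 : (0:ℤ) ≤ (b i5:ℤ) := Int.natCast_nonneg _
    have hA6 : (0:ℤ) ≤ (b i6:ℤ) := Int.natCast_nonneg _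
    have hA7 : (0:ℤ) ≤ (b i7:ℤ) := Int.natCast_nonneg _
    linarith [hS8i, hprod, hA0, hA1, hA2, hA3, hA4, hA5, hA6, hA7, h36]
  -- divisibility forces p = q
  have hti : (tSU N b : ℤ) = (((b i0:ℤ) + 2*(b i1:ℤ) + 3*(b i2:ℤ) + 4*(b i3:ℤ))
      - ((b i7:ℤ) + 2*(b i6:ℤ) + 3*(b i5:ℤ) + 4*(b i4:ℤ)))
      + (N:ℤ) * ((b i4:ℤ) + (b i5:ℤ) + (b i6:ℤ) + (b i7:ℤ)) := by
    have e1 : ((N-1:ℕ):ℤ) = (N:ℤ)-1 := by omega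
    have e2 : ((N-2:ℕ):ℤ) = (N:ℤ)-2 := by omega
    have e3 : ((N-3:ℕ):ℤ) = (N:ℤ)-3 := by omega
    have e4 : ((N-4:ℕ):ℤ) = (N:ℤ)-4 := by omega
    rw [ht8]
    push_cast [e1, e2, e3, e4]
    ring
  have hdq : (d:ℤ) ∣ (((b i0:ℤ) + 2*(b i1:ℤ) + 3*(b i2:ℤ) + 4*(b i3:ℤ))
      - ((b i7:ℤ) + 2*(b i6:ℤ) + 3*(b i5:ℤ) + 4*(b i4:ℤ))) := by
    have h1 : (d:ℤ) ∣ (tSU N b : ℤ) := Int.natCast_dvd_natCast.mpr hdvd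
    have h2 : (d:ℤ) ∣ (N:ℤ) * ((b i4:ℤ) + (b i5:ℤ) + (b i6:ℤ) + (b i7:ℤ)) :=
      Dvd.dvd.mul_right (Int.natCast_dvd_natCast.mpr hdN) _
    have h3 : (((b i0:ℤ) + 2*(b i1:ℤ) + 3*(b i2:ℤ) + 4*(b i3:ℤ))
        - ((b i7:ℤ) + 2*(b i6:ℤ) + 3*(b i5:ℤ) + 4*(b i4:ℤ)))
        = (tSU N b : ℤ) - (N:ℤ) * ((b i4:ℤ) + (b i5:ℤ) + (b i6:ℤ) + (b i7:ℤ)) := by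
      rw [hti]; ring
    rw [h3]
    exact dvd_sub h1 h2
  have hzero := Int.eq_zero_of_abs_lt_dvd hdq (by rw [abs_lt]; constructor <;> omega)
  have hv' := enum8 (b i0) (b i1) (b i2) (b i3) (b i7) (b i6) (b i5) (b i4) hpq hzero
  -- coordinate description
  have hcoord : ∀ j : Fin (N-1), b j =
      if j.1 = 0 then b i0 else if j.1 = 1 then b i1 else if j.1 = 2 then b i2
      else if j.1 = 3 then b i3 else if j.1 = N-5 then b i4 else if j.1 = N-4 then b i5
      else if j.1 = N-3 then b i6 else if j.1 = N-2 then b i7 else 0 := by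
    intro j
    have hjlt := j.isLt
    split_ifs with h0 h1 h2 h3 h4 h5 h6 h7
    · exact congrArg b (Fin.ext (by omega))
    · exact congrArg b (Fin.ext (by omega))
    · exact congrArg b (Fin.ext (by omega))
    · exact congrArg b (Fin.ext (by omega))
    · exact congrArg b (Fin.ext (by omega))
    · exact congrArg b (Fin.ext (by omega))
    · exact congrArg b (Fin.ext (by omega))
    · exact congrArg b (Fin.ext (by omega))
    · exact hmid j (by omega) (by omega)
  have hv : (b i0 = 0 ∧ b i1 = 0 ∧ b i2 = 0 ∧ b i3 = 0 ∧ b i7 = 0 ∧ b i6 = 0 ∧ b i5 = 0 ∧ b i4 = 0)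
      ∨ (b i0 = 1 ∧ b i1 = 0 ∧ b i2 = 0 ∧ b i3 = 0 ∧ b i7 = 1 ∧ b i6 = 0 ∧ b i5 = 0 ∧ b i4 = 0)
      ∨ (b i0 = 2 ∧ b i1 = 0 ∧ b i2 = 0 ∧ b i3 = 0 ∧ b i7 = 2 ∧ b i6 = 0 ∧ b i5 = 0 ∧ b i4 = 0)
      ∨ (b i0 = 2 ∧ b i1 = 0 ∧ b i2 = 0 ∧ b i3 = 0 ∧ b i7 = 0 ∧ b i6 = 1 ∧ b i5 = 0 ∧ b i4 = 0)
      ∨ (b i0 = 0 ∧ b i1 = 1 ∧ b i2 = 0 ∧ b i3 = 0 ∧ b i7 = 2 ∧ b i6 = 0 ∧ b i5 = 0 ∧ b i4 = 0)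
      ∨ (b i0 = 0 ∧ b i1 = 1 ∧ b i2 = 0 ∧ b i3 = 0 ∧ b i7 = 0 ∧ b i6 = 1 ∧ b i5 = 0 ∧ b i4 = 0) := hv'
  rcases hv with ⟨v0,v1,v2,v3,v7,v6,v5,v4⟩ | ⟨v0,v1,v2,v3,v7,v6,v5,v4⟩ | ⟨v0,v1,v2,v3,v7,v6,v5,v4⟩
    | ⟨v0,v1,v2,v3,v7,v6,v5,v4⟩ | ⟨v0,v1,v2,v3,v7,v6,v5,v4⟩ | ⟨v0,v1,v2,v3,v7,v6,v5,v4⟩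
  · refine Or.inl ?_
    funext j
    have hjlt := j.isLt
    show b j = (0:ℕ)
    rw [hcoord j]
    split_ifs <;> omega
  · refine Or.inr (Or.inl ?_)
    funext j
    have hjlt := j.isLt
    show b j = (if j.1+1 = 1 then 1 else 0) + (if j.1+1 = N-1 then 1 else 0)
    rw [hcoord j]
    split_ifs <;> omega
  · refine Or.inr (Or.inr (Or.inr (Or.inr (Or.inr ?_))))
    funext j
    have hjlt := j.isLt
    show b j = 2*(if j.1+1 = 1 then 1 else 0) + 2*(if j.1+1 = N-1 then 1 else 0)
    rw [hcoord j]
    split_ifs <;> omega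
  · refine Or.inr (Or.inr (Or.inr (Or.inl ?_)))
    funext j
    have hjlt := j.isLt
    show b j = 2*(if j.1+1 = 1 then 1 else 0) + (if j.1+1 = N-2 then 1 else 0)
    rw [hcoord j]
    split_ifs <;> omega
  · refine Or.inr (Or.inr (Or.inr (Or.inr (Or.inl ?_))))
    funext j
    have hjlt := j.isLt
    show b j = (if j.1+1 = 2 then 1 else 0) + 2*(if j.1+1 = N-1 then 1 else 0)
    rw [hcoord j]
    split_ifs <;> omega
  · refine Or.inr (Or.inr (Or.inl ?_))
    funext j
    have hjlt := j.isLt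
    show b j = (if j.1+1 = 2 then 1 else 0) + (if j.1+1 = N-2 then 1 else 0)
    rw [hcoord j]
    split_ifs <;> omega

lemma eSU_eq (a : ℕ) (h1 : 1 ≤ a) (ha : a ≤ N-1) :
    eSU N a = fun j : Fin (N-1) => if j = (⟨a-1, by omega⟩ : Fin (N-1)) then 1 else 0 := by
  funext j
  refine if_congr ?_ rfl rfl
  rw [Fin.ext_iff]
  constructor <;> intro h <;> simp_all <;> omega

lemma Sl_eval (a a' u v : ℕ) (h1 : 1 ≤ a) (hlt : a < a') (ha' : a' ≤ N-1) :
    Sl N (fun j => u * eSU N a j + v * eSU N a' j) = a*(N-a)*u + a'*(N-a')*v := by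
  rw [Sl, eSU_eq a h1 (by omega), eSU_eq a' (by omega) ha']
  simp only [mul_ite, mul_one, mul_zero, mul_add, ite_mul, zero_mul,
    Finset.sum_add_distrib, Finset.sum_ite_eq', Finset.mem_univ, if_true]
  rw [show a-1+1 = a from by omega, show a'-1+1 = a' from by omega,
    show N-1-(a-1) = N-a from by omega, show N-1-(a'-1) = N-a' from by omega]

lemma Pq_eval (a a' u v : ℕ) (h1 : 1 ≤ a) (hlt : a < a') (ha' : a' ≤ N-1) :
    Pq N (fun j => u * eSU N a j + v * eSU N a' j)
      = a*(N-a)*(u*u) + a*(N-a')*(u*v) + a*(N-a')*(v*u) + a'*(N-a')*(v*v) := by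
  obtain ⟨A, rfl⟩ : ∃ x, a = x+1 := ⟨a-1, by omega⟩
  obtain ⟨A', rfl⟩ : ∃ x, a' = x+1 := ⟨a'-1, by omega⟩
  rw [Pq, eSU_eq (A+1) (by omega) (by omega), eSU_eq (A'+1) (by omega) ha']
  simp only [Nat.add_sub_cancel, mul_ite, mul_one, mul_zero, mul_add, add_mul, ite_mul, zero_mul,
    zero_add, add_zero, Finset.sum_add_distrib, Finset.sum_ite_eq', Finset.mem_univ, if_true]
  rw [show min A A' = A from by omega, show max A A' = A' from by omega,
    show min A' A = A from by omega, show max A' A = A' from by omega,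
    show min A A = A from by omega, show max A A = A from by omega,
    show min A' A' = A' from by omega, show max A' A' = A' from by omega,
    show N-1-A = N-(A+1) from by omega, show N-1-A' = N-(A'+1) from by omega]
  ring

lemma Qval (a a' u v : ℕ) (h1 : 1 ≤ a) (hlt : a < a') (ha' : a' ≤ N-1) :
    QSU N (fun j => u * eSU N a j + v * eSU N a' j)
      = (a:ℤ)*((N:ℤ)-(a:ℤ))*(u*u) + 2*(a:ℤ)*((N:ℤ)-(a':ℤ))*(u*v) + (a':ℤ)*((N:ℤ)-(a':ℤ))*(v*v)
        + (N:ℤ)*((a:ℤ)*((N:ℤ)-(a:ℤ))*(u:ℤ) + (a':ℤ)*((N:ℤ)-(a':ℤ))*(v:ℤ)) := by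
  rw [L1, Sl_eval a a' u v h1 hlt ha', Pq_eval a a' u v h1 hlt ha']
  have e1 : ((N-a:ℕ):ℤ) = (N:ℤ)-(a:ℤ) := by omega
  have e2 : ((N-a':ℕ):ℤ) = (N:ℤ)-(a':ℤ) := by omega
  push_cast [e1, e2]
  ring

lemma Q_zero : QSU N (0 : Fin (N-1) → ℕ) = 0 := by
  have h : ∀ i, cSU N (0 : Fin (N-1) → ℕ) i = 0 := by
    intro i; rw [cSU]; simp
  simp [QSU, h]

lemma bridge1 (hN36 : 36 ≤ N) : eSU N 1 + eSU N (N-1)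
    = (fun j => 1 * eSU N 1 j + 1 * eSU N (N-1) j) := by
  funext j; show eSU N 1 j + eSU N (N-1) j = _; ring

lemma bridge2 (hN36 : 36 ≤ N) : eSU N 2 + eSU N (N-2)
    = (fun j => 1 * eSU N 2 j + 1 * eSU N (N-2) j) := by
  funext j; show eSU N 2 j + eSU N (N-2) j = _; ring

lemma bridge3 (hN36 : 36 ≤ N) : 2 • eSU N 1 + eSU N (N-2)
    = (fun j => 2 * eSU N 1 j + 1 * eSU N (N-2) j) := by
  funext j; show 2 * eSU N 1 j + eSU N (N-2) j = _; ring

lemma bridge4 (hN36 : 36 ≤ N) : eSU N 2 + 2 • eSU N (N-1)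
    = (fun j => 1 * eSU N 2 j + 2 * eSU N (N-1) j) := by
  funext j; show eSU N 2 j + 2 * eSU N (N-1) j = _; ring

lemma bridge5 (hN36 : 36 ≤ N) : 2 • eSU N 1 + 2 • eSU N (N-1)
    = (fun j => 2 * eSU N 1 j + 2 * eSU N (N-1) j) := by
  funext j; show 2 * eSU N 1 j + 2 * eSU N (N-1) j = _; ring

lemma QV1 (hN36 : 36 ≤ N) : QSU N (eSU N 1 + eSU N (N-1)) = 2*(N:ℤ)*(N:ℤ) := by
  rw [bridge1 hN36, Qval 1 (N-1) 1 1 (by omega) (by omega) (by omega)]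
  have e : ((N-1:ℕ):ℤ) = (N:ℤ)-1 := by omega
  rw [e]; push_cast; ring

lemma QV2 (hN36 : 36 ≤ N) : QSU N (eSU N 2 + eSU N (N-2)) = 4*(N:ℤ)*(N:ℤ) - 4*(N:ℤ) := by
  rw [bridge2 hN36, Qval 2 (N-2) 1 1 (by omega) (by omega) (by omega)]
  have e : ((N-2:ℕ):ℤ) = (N:ℤ)-2 := by omega
  rw [e]; push_cast; ring

lemma QV3 (hN36 : 36 ≤ N) : QSU N (2 • eSU N 1 + eSU N (N-2)) = 4*(N:ℤ)*(N:ℤ) := by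
  rw [bridge3 hN36, Qval 1 (N-2) 2 1 (by omega) (by omega) (by omega)]
  have e : ((N-2:ℕ):ℤ) = (N:ℤ)-2 := by omega
  rw [e]; push_cast; ring

lemma QV4 (hN36 : 36 ≤ N) : QSU N (eSU N 2 + 2 • eSU N (N-1)) = 4*(N:ℤ)*(N:ℤ) := by
  rw [bridge4 hN36, Qval 2 (N-1) 1 2 (by omega) (by omega) (by omega)]
  have e : ((N-1:ℕ):ℤ) = (N:ℤ)-1 := by omega
  rw [e]; push_cast; ring

lemma QV5 (hN36 : 36 ≤ N) : QSU N (2 • eSU N 1 + 2 • eSU N (N-1)) = 4*(N:ℤ)*((N:ℤ)+1) := by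
  rw [bridge5 hN36, Qval 1 (N-1) 2 2 (by omega) (by omega) (by omega)]
  have e : ((N-1:ℕ):ℤ) = (N:ℤ)-1 := by omega
  rw [e]; push_cast; ring


/-- let `n ≥ 9`, `d = n` (`n` odd) or `d = n/2` (`n` even), and
`N = n(n−1)/2` or `N = n(n+1)/2`. Let `b` be a tuple of non-negative integers
with `d ∣ t(b)`. Then (i) if `Q_N(b) < 4N(N+1)` then `b` is one of `0`,
`e₁+e_{N−1}`, `e₂+e_{N−2}`, `2e₁+e_{N−2}`, `e₂+2e_{N−1}`; and (ii)
`Q_N(b) = 4N(N+1)` iff `b = 2e₁+2e_{N−1}`. -/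
theorem stmt8 (n d N : ℕ) (hn : 9 ≤ n)
    (hd : d = if n % 2 = 1 then n else n / 2)
    (hN : N = n * (n - 1) / 2 ∨ N = n * (n + 1) / 2)
    (b : Fin (N - 1) → ℕ) (hdvd : d ∣ tSU N b) :
    (QSU N b < 4 * (N : ℤ) * ((N : ℤ) + 1) →
      b = 0 ∨ b = eSU N 1 + eSU N (N - 1) ∨ b = eSU N 2 + eSU N (N - 2) ∨
      b = 2 • eSU N 1 + eSU N (N - 2) ∨ b = eSU N 2 + 2 • eSU N (N - 1)) ∧
    (QSU N b = 4 * (N : ℤ) * ((N : ℤ) + 1) ↔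
      b = 2 • eSU N 1 + 2 • eSU N (N - 1)) := by
  have hN36 : 36 ≤ N := by
    have h8 : 8 ≤ n-1 := by omega
    have h72 : 72 ≤ n*(n-1) := by
      calc (72:ℕ) = 9*8 := rfl
        _ ≤ n*(n-1) := Nat.mul_le_mul hn h8
    have h72' : 72 ≤ n*(n+1) := by
      calc (72:ℕ) = 9*8 := rfl
        _ ≤ n*(n+1) := Nat.mul_le_mul hn (by omega)
    rcases hN with h|h <;> omega
  have hd5 : 5 ≤ d := by rw [hd]; split_ifs <;> omega
  have hdN : d ∣ N := by
    rw [hd]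
    rcases hN with h|h <;> subst h <;> split_ifs with hpar
    · obtain ⟨k, hk⟩ : ∃ k, n = 2*k+1 := ⟨n/2, by omega⟩
      subst hk
      rw [show 2*k+1-1 = 2*k from by omega,
        show (2*k+1)*(2*k) = ((2*k+1)*k)*2 from by ring,
        Nat.mul_div_cancel _ (by norm_num)]
      exact Dvd.intro _ rfl
    · obtain ⟨k, hk⟩ : ∃ k, n = 2*k := ⟨n/2, by omega⟩
      subst hk
      rw [show 2*k/2 = k from by omega,
        show (2*k)*(2*k-1) = (k*(2*k-1))*2 from by ring,
        Nat.mul_div_cancel _ (by norm_num)]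
      exact dvd_mul_right _ _
    · obtain ⟨k, hk⟩ : ∃ k, n = 2*k+1 := ⟨n/2, by omega⟩
      subst hk
      rw [show 2*k+1+1 = 2*(k+1) from by omega,
        show (2*k+1)*(2*(k+1)) = ((2*k+1)*(k+1))*2 from by ring,
        Nat.mul_div_cancel _ (by norm_num)]
      exact Dvd.intro _ rfl
    · obtain ⟨k, hk⟩ : ∃ k, n = 2*k := ⟨n/2, by omega⟩
      subst hk
      rw [show 2*k/2 = k from by omega,
        show (2*k)*(2*k+1) = (k*(2*k+1))*2 from by ring,
        Nat.mul_div_cancel _ (by norm_num)]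
      exact dvd_mul_right _ _
  have h36 : (36:ℤ) ≤ (N:ℤ) := by exact_mod_cast hN36
  have hNN : (0:ℤ) ≤ (N:ℤ)*(N:ℤ) := mul_nonneg (by linarith) (by linarith)
  constructor
  · intro hlt
    rcases classify b hN36 d hd5 hdN hdvd (le_of_lt hlt) with h|h|h|h|h|h
    · exact Or.inl h
    · exact Or.inr (Or.inl h)
    · exact Or.inr (Or.inr (Or.inl h))
    · exact Or.inr (Or.inr (Or.inr (Or.inl h)))
    · exact Or.inr (Or.inr (Or.inr (Or.inr h)))
    · rw [h, QV5 hN36] at hlt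
      exact absurd hlt (lt_irrefl _)
  · constructor
    · intro heq
      rcases classify b hN36 d hd5 hdN hdvd (le_of_eq heq) with h|h|h|h|h|h
      · rw [h, Q_zero] at heq; exfalso; linarith
      · rw [h, QV1 hN36] at heq; exfalso; linarith
      · rw [h, QV2 hN36] at heq; exfalso; linarith
      · rw [h, QV3 hN36] at heq; exfalso; linarith
      · rw [h, QV4 hN36] at heq; exfalso; linarith
      · exact h
    · intro h
      rw [h]
      exact QV5 hN36
end

section
/- Let m ≥ 3 be an integer and let a = (a₁,…,a_m) and b = (b₁,…,b_m) be nonzero tuples of real numbers satisfying the type-D dominance conditions a₁ ≥ a₂ ≥ ⋯ ≥ a_{m−1} ≥ |a_m| and b₁ ≥ b₂ ≥ ⋯ ≥ b_{m−1} ≥ |b_m|. Then Σ_{i=1}^{m} aᵢbᵢ > 0. Consequently, for every real number N, C_N(a+b) > C_N(a) + C_N(b), where C_N(x) = Σ_{i=1}^{m} xᵢ(xᵢ + N − 2i) and a+b is the coordinatewise sum. -/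
open Finset

/-- The Casimir number `C_N(x) = Σ_{i=1}^{m} xᵢ(xᵢ + N − 2i)` for a tuple of
real numbers and a real parameter `N`. -/
def casimirR (N : ℝ) {m : ℕ} (x : Fin m → ℝ) : ℝ :=
  ∑ i : Fin m, x i * (x i + N - 2 * ((i.1 : ℝ) + 1))

/-- let `m ≥ 3` and let `a`, `b` be nonzero real tuples
satisfying the type-D dominance conditions `a₁ ≥ ⋯ ≥ a_{m−1} ≥ |a_m|` and
`b₁ ≥ ⋯ ≥ b_{m−1} ≥ |b_m|`. Then `Σ aᵢbᵢ > 0`, and consequently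
`C_N(a+b) > C_N(a) + C_N(b)` for every real `N`. -/
theorem stmt12 (m : ℕ) (hm : 3 ≤ m) (a b : Fin m → ℝ)
    (ha0 : a ≠ 0) (hb0 : b ≠ 0)
    (hamono : ∀ i j : Fin m, i ≤ j → (j.1 : ℕ) + 1 < m → a j ≤ a i)
    (halast : |a ⟨m - 1, by omega⟩| ≤ a ⟨m - 2, by omega⟩)
    (hbmono : ∀ i j : Fin m, i ≤ j → (j.1 : ℕ) + 1 < m → b j ≤ b i)
    (hblast : |b ⟨m - 1, by omega⟩| ≤ b ⟨m - 2, by omega⟩) :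
    0 < ∑ i : Fin m, a i * b i ∧
    ∀ N : ℝ, casimirR N a + casimirR N b < casimirR N (a + b) := by
  have hm1 : m - 1 < m := by omega
  have hm2 : m - 2 < m := by omega
  have hm0 : 0 < m := by omega
  set iL : Fin m := ⟨m - 1, hm1⟩ with hiL
  set i2 : Fin m := ⟨m - 2, hm2⟩ with hi2
  set i0 : Fin m := ⟨0, hm0⟩ with hi0
  have halast' : |a iL| ≤ a i2 := halast
  have hblast' : |b iL| ≤ b i2 := hblast
  have ha2 : 0 ≤ a i2 := le_trans (abs_nonneg _) halast'
  have hb2 : 0 ≤ b i2 := le_trans (abs_nonneg _) hblast'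
  -- nonnegativity of all entries except the last
  have hidx : ∀ i : Fin m, i ≠ iL → i.1 + 1 < m := by
    intro i hi
    have h2 := i.2
    rcases Nat.lt_or_ge (i.1 + 1) m with h | h
    · exact h
    · exact absurd (Fin.ext (by simp [hiL]; omega)) hi
  have hanneg : ∀ i : Fin m, i ≠ iL → 0 ≤ a i := by
    intro i hi
    have hi' := hidx i hi
    have h1 : a i2 ≤ a i := hamono i i2 (by simp [Fin.le_def, hi2]; omega)
      (by simp [hi2]; omega)
    linarith
  have hbnneg : ∀ i : Fin m, i ≠ iL → 0 ≤ b i := by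
    intro i hi
    have hi' := hidx i hi
    have h1 : b i2 ≤ b i := hbmono i i2 (by simp [Fin.le_def, hi2]; omega)
      (by simp [hi2]; omega)
    linarith
  -- positivity of the first entry
  have hfirst : ∀ (c : Fin m → ℝ), c ≠ 0 →
      (∀ i j : Fin m, i ≤ j → (j.1 : ℕ) + 1 < m → c j ≤ c i) →
      |c iL| ≤ c i2 → (∀ i : Fin m, i ≠ iL → 0 ≤ c i) → 0 < c i0 := by
    intro c hc0 hcmono hclast hcnneg
    by_contra h
    push_neg at h
    apply hc0
    funext i
    simp only [Pi.zero_apply]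
    by_cases hi : i = iL
    · subst hi
      have h1 : c i2 ≤ c i0 := hcmono i0 i2 (by simp [Fin.le_def, hi0]) (by simp [hi2]; omega)
      have h2 : 0 ≤ c i2 := le_trans (abs_nonneg _) hclast
      have : |c iL| ≤ 0 := by linarith
      have := abs_nonneg (c iL)
      have : |c iL| = 0 := by linarith
      exact abs_eq_zero.mp this
    · have h1 : c i ≤ c i0 := hcmono i0 i (by simp [Fin.le_def, hi0]) (hidx i hi)
      have h2 := hcnneg i hi
      linarith
  have ha00 : 0 < a i0 := hfirst a ha0 hamono halast' hanneg
  have hb00 : 0 < b i0 := hfirst b hb0 hbmono hblast' hbnneg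
  -- the key positivity of the sum
  have hiL2 : i2 ≠ iL := by simp [hi2, hiL, Fin.ext_iff]; omega
  have hiL0 : i0 ≠ iL := by simp [hi0, hiL, Fin.ext_iff]; omega
  have h02 : i0 ≠ i2 := by simp [hi0, hi2, Fin.ext_iff]; omega
  have hsum : 0 < ∑ i : Fin m, a i * b i := by
    have hsplit : ∑ i ∈ (univ : Finset (Fin m)).erase iL, a i * b i + a iL * b iL
        = ∑ i : Fin m, a i * b i := Finset.sum_erase_add _ _ (mem_univ iL)
    have hpairsub : ({i0, i2} : Finset (Fin m)) ⊆ (univ : Finset (Fin m)).erase iL := by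
      intro x hx
      simp only [mem_insert, mem_singleton] at hx
      rcases hx with rfl | rfl
      · exact mem_erase.mpr ⟨hiL0, mem_univ _⟩
      · exact mem_erase.mpr ⟨hiL2, mem_univ _⟩
    have hpair : ∑ i ∈ ({i0, i2} : Finset (Fin m)), a i * b i = a i0 * b i0 + a i2 * b i2 :=
      Finset.sum_pair h02
    have hle : ∑ i ∈ ({i0, i2} : Finset (Fin m)), a i * b i
        ≤ ∑ i ∈ (univ : Finset (Fin m)).erase iL, a i * b i := by
      apply Finset.sum_le_sum_of_subset_of_nonneg hpairsub
      intro i hi _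
      exact mul_nonneg (hanneg i (mem_erase.mp hi).1) (hbnneg i (mem_erase.mp hi).1)
    have habs : 0 ≤ a i2 * b i2 + a iL * b iL := by
      have h1 : |a iL * b iL| ≤ a i2 * b i2 := by
        rw [abs_mul]
        exact mul_le_mul halast' hblast' (abs_nonneg _) ha2
      have := neg_abs_le (a iL * b iL)
      linarith
    have hpos : 0 < a i0 * b i0 := mul_pos ha00 hb00
    rw [hpair] at hle
    linarith
  refine ⟨hsum, fun N => ?_⟩
  have key : casimirR N (a + b) = casimirR N a + casimirR N b + 2 * ∑ i : Fin m, a i * b i := by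
    simp only [casimirR, Pi.add_apply, Finset.mul_sum, ← Finset.sum_add_distrib]
    apply Finset.sum_congr rfl
    intro i _
    ring
  linarith
end
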